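/- arXiv:1609.05657 — 5 statements merged into one kernel-verified Lean document; each statement's English description precedes it below -/
import Mathlib

section
/- Let q ≥ 5 and 1 ≤ w ≤ (q+1)/2 be integers. Then ∏_{i=1}^{w} (1 - (i-2)/(q+1-i)) < e^{-S}, where S = -w + (q-1) ln((q+1)/(q+1-w)). -/
/-!
Since `1 - a < exp (-a)` for `a ≠ 0`, the product is strictly below `exp (-∑ aᵢ)` with
`aᵢ = (i - 2)/(q + 1 - i) = -1 + (q - 1)/(q + 1 - i)`. Hence `∑ aᵢ = -w + (q - 1) ∑ 1/(q + 1 - i)`,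
and comparing each `1/t` with `log ((t + 1)/t)` bounds the harmonic-type sum below by
`log ((q + 1)/(q + 1 - w))`.
-/

open Finset Real

lemma prod_one_sub_lt_exp_neg_sum {ι : Type*} {s : Finset ι} {a : ι → ℝ}
    (ha : ∀ i ∈ s, a i < 1) (hne : ∃ i ∈ s, a i ≠ 0) :
    ∏ i ∈ s, (1 - a i) < exp (-∑ i ∈ s, a i) := by
  rw [← sum_neg_distrib, exp_sum]
  obtain ⟨j, hj, hj0⟩ := hne
  exact prod_lt_prod (fun i hi ↦ sub_pos.mpr (ha i hi)) (fun i _ ↦ one_sub_le_exp_neg (a i))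
    ⟨j, hj, one_sub_lt_exp_neg hj0⟩

lemma log_div_sub_le_sum_inv (y : ℝ) : ∀ w : ℕ, (w : ℝ) < y →
    log (y / (y - w)) ≤ ∑ i ∈ Icc 1 w, 1 / (y - i)
  | 0, _ => by simp
  | n + 1, hw => by
    push_cast at hw ⊢
    have hpos : 0 < y - (n + 1) := by linarith
    have hstep : log ((y - n) / (y - (n + 1))) ≤ 1 / (y - (n + 1)) := by
      calc log ((y - n) / (y - (n + 1))) ≤ (y - n) / (y - (n + 1)) - 1 :=
            log_le_sub_one_of_pos (div_pos (by linarith) hpos)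
        _ = 1 / (y - (n + 1)) := by field_simp; ring
    have hsplit : log (y / (y - (n + 1))) = log (y / (y - n)) + log ((y - n) / (y - (n + 1))) := by
      have hn : y - n ≠ 0 := by linarith
      rw [← log_mul (div_ne_zero (by linarith) hn) (div_ne_zero hn hpos.ne')]
      congr 1
      field_simp
    rw [sum_Icc_succ_top (by omega), hsplit]
    push_cast
    linarith [log_div_sub_le_sum_inv y n (by linarith)]

lemma sum_sub_two_div_eq (y : ℝ) (w : ℕ) (hw : (w : ℝ) < y) :
    ∑ i ∈ Icc 1 w, ((i : ℝ) - 2) / (y - i) = -w + (y - 2) * ∑ i ∈ Icc 1 w, 1 / (y - i) := by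
  have hterm : ∀ i ∈ Icc 1 w, ((i : ℝ) - 2) / (y - i) = -1 + (y - 2) * (1 / (y - i)) := by
    intro i hi
    have hi : (i : ℝ) ≤ w := by exact_mod_cast (mem_Icc.mp hi).2
    field_simp [show y - i ≠ 0 by linarith]
    ring
  rw [sum_congr rfl hterm, sum_add_distrib, ← mul_sum, sum_const, Nat.card_Icc]
  simp

theorem prod_lt_exp_neg_S_general (q w : ℕ) (hw1 : 1 ≤ w) (hw2 : 2 * w ≤ q + 1) :
    ∏ i ∈ Finset.Icc 1 w, (1 - ((i : ℝ) - 2) / ((q : ℝ) + 1 - i)) <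
      Real.exp (-(-(w : ℝ) + ((q : ℝ) - 1) * Real.log (((q : ℝ) + 1) / ((q : ℝ) + 1 - w)))) := by
  have hw2R : 2 * (w : ℝ) ≤ q + 1 := by exact_mod_cast hw2
  have hw1R : (1 : ℝ) ≤ w := by exact_mod_cast hw1
  have hfactor_pos : ∀ i ∈ Icc 1 w, ((i : ℝ) - 2) / ((q : ℝ) + 1 - i) < 1 := by
    intro i hi
    have hi : (i : ℝ) ≤ w := by exact_mod_cast (mem_Icc.mp hi).2
    rw [div_lt_one (by linarith)]
    linarith
  have hfirst_ne : ∃ i ∈ Icc 1 w, ((i : ℝ) - 2) / ((q : ℝ) + 1 - i) ≠ 0 :=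
    ⟨1, mem_Icc.mpr ⟨le_rfl, hw1⟩, div_ne_zero (by norm_num) (by push_cast; linarith)⟩
  refine (prod_one_sub_lt_exp_neg_sum hfactor_pos hfirst_ne).trans_le (exp_le_exp.mpr ?_)
  have hwy : (w : ℝ) < q + 1 := by linarith
  rw [sum_sub_two_div_eq _ w hwy, neg_le_neg_iff, show (q : ℝ) + 1 - 2 = q - 1 by ring]
  gcongr
  · linarith
  · exact log_div_sub_le_sum_inv _ w hwy

theorem prod_lt_exp_neg_S (q w : ℕ) (hq : 5 ≤ q) (hw1 : 1 ≤ w) (hw2 : 2 * w ≤ q + 1) :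
    ∏ i ∈ Finset.Icc 1 w, (1 - ((i : ℝ) - 2) / ((q : ℝ) + 1 - i)) <
      Real.exp (-(-(w : ℝ) + ((q : ℝ) - 1) * Real.log (((q : ℝ) + 1) / ((q : ℝ) + 1 - w)))) :=
  prod_lt_exp_neg_S_general q w hw1 hw2
end

section
/- Let K_w be a w-point subset of a nondegenerate conic C in PG(2,q) and let U(K_w) be the set of points of M_q not covered by K_w (q odd: M_q = PG(2,q) \ C; q even: M_q = PG(2,q) \ (C ∪ {O}) with O the nucleus). If w < (q+3)/2, then there exists a point A ∈ C \ K_w such that the number of points of U(K_w) covered by K_w ∪ {A} but not by K_w is at least ⌈(w-2)·#U(K_w)/(q+1-w)⌉. -/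
open scoped Classical
noncomputable section
abbrev PG2 (F : Type) [Field F] : Type := Projectivization F (Fin 3 → F)
variable {F : Type} [Field F] [Fintype F]

/-- Three points of `PG(2,q)` are collinear if they lie in a common
projective line, i.e. a common 2-dimensional linear subspace. -/
def Collinear3 (a b c : PG2 F) : Prop :=
  ∃ W : Submodule F (Fin 3 → F), Module.finrank F W = 2 ∧
    a.rep ∈ W ∧ b.rep ∈ W ∧ c.rep ∈ W

/-- A (projective) line of `PG(2,q)`: the point set of a 2-dimensional linear subspace. -/
def IsLine (L : Set (PG2 F)) : Prop :=
  ∃ W : Submodule F (Fin 3 → F), Module.finrank F W = 2 ∧ L = {p : PG2 F | p.rep ∈ W}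

/-- An arc: no three distinct points collinear. -/
def IsArc (C : Set (PG2 F)) : Prop :=
  ∀ a ∈ C, ∀ b ∈ C, ∀ c ∈ C, a ≠ b → b ≠ c → a ≠ c → ¬ Collinear3 a b c

/-- A nondegenerate conic: the zero locus of a quadratic form which is
a `(q+1)`-arc. -/
def IsConic (C : Set (PG2 F)) : Prop :=
  (∃ Q : QuadraticForm F (Fin 3 → F), C = {p : PG2 F | Q p.rep = 0}) ∧
  IsArc C ∧ C.ncard = Fintype.card F + 1

/-- A tangent of `C`: a line meeting `C` in exactly one point. -/
def IsTangent (C L : Set (PG2 F)) : Prop := IsLine L ∧ (L ∩ C).ncard = 1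

/-- A bisecant of `C`: a line meeting `C` in exactly two points. -/
def IsBisecant (C L : Set (PG2 F)) : Prop := IsLine L ∧ (L ∩ C).ncard = 2

/-- A point `P` is covered by a point set `K` if `P` is collinear with two
distinct points of `K` (i.e. `P` lies on a bisecant of `K`). -/
def Covered (K : Set (PG2 F)) (P : PG2 F) : Prop :=
  ∃ a ∈ K, ∃ b ∈ K, a ≠ b ∧ Collinear3 a b P

/-- `O` is a nucleus of `C` if every tangent of `C` passes through `O`. -/
def IsNucleus (C : Set (PG2 F)) (O : PG2 F) : Prop :=
  ∀ L : Set (PG2 F), IsTangent C L → O ∈ L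

/-- The point set `M_q`: all points off `C` (and also off the nucleus when `q` is even). -/
def Mset (C : Set (PG2 F)) : Set (PG2 F) :=
  if Even (Fintype.card F) then (Set.univ \ C) \ {O : PG2 F | IsNucleus C O}
  else Set.univ \ C

/-- An almost complete subset of the conic `C`: a proper subset of `C`
covering every point of `M_q`. -/
def IsACSubset (C S : Set (PG2 F)) : Prop :=
  S ⊂ C ∧ ∀ P ∈ Mset C, Covered S P

/-- The smallest size of an almost complete subset of `C`. -/
noncomputable def tAC (C : Set (PG2 F)) : ℕ :=
  sInf {n : ℕ | ∃ S : Set (PG2 F), IsACSubset C S ∧ S.ncard = n}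


instance : Finite (PG2 F) := Quotient.finite _
example : Module.finrank F (Fin 3 → F) = 3 := by simp [Module.finrank_fin_fun]
lemma li_of_ne {a b : PG2 F} (h : a ≠ b) : LinearIndependent F ![a.rep, b.rep] := by
  have := (Projectivization.independent_pair_iff_ne a b).2 h
  rw [Projectivization.independent_iff] at this
  convert this using 1
  ext i x
  fin_cases i <;> simp
  rfl

lemma li_pair {x y : Fin 3 → F} (h : LinearIndependent F ![x, y]) {c d : F}
    (hc : c • x + d • y = 0) : c = 0 ∧ d = 0 := by
  rw [LinearIndependent.pair_iff] at h
  exact h c d hc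

lemma finrank_span_pair {x y : Fin 3 → F} (h : LinearIndependent F ![x, y]) :
    Module.finrank F (Submodule.span F {x, y}) = 2 := by
  have := finrank_span_eq_card h
  rw [show Set.range ![x, y] = {x, y} by
    simp [Matrix.range_cons, Matrix.range_empty, Set.pair_comm y x]] at this
  simpa using this

/-- any 2-dim subspace containing the reps of two distinct points equals their span -/
lemma line_unique {x y : Fin 3 → F} (h : LinearIndependent F ![x, y])
    {W : Submodule F (Fin 3 → F)} (hW : Module.finrank F W = 2)
    (hx : x ∈ W) (hy : y ∈ W) : W = Submodule.span F {x, y} := by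
  symm
  apply Submodule.eq_of_le_of_finrank_eq
  · exact Submodule.span_le.2 (by rintro z (rfl | rfl) <;> assumption)
  · rw [finrank_span_pair h, hW]

lemma mk_rep_mem_iff {v : Fin 3 → F} (hv : v ≠ 0) {W : Submodule F (Fin 3 → F)} :
    (Projectivization.mk F v hv).rep ∈ W ↔ v ∈ W := by
  obtain ⟨a, ha⟩ := Projectivization.exists_smul_eq_mk_rep F v hv
  rw [← ha, Units.smul_def, W.smul_mem_iff a.ne_zero]

lemma mk_Q_zero_iff (Q : QuadraticForm F (Fin 3 → F)) {v : Fin 3 → F} (hv : v ≠ 0) :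
    Q (Projectivization.mk F v hv).rep = 0 ↔ Q v = 0 := by
  obtain ⟨a, ha⟩ := Projectivization.exists_smul_eq_mk_rep F v hv
  rw [← ha, Units.smul_def, QuadraticMap.map_smul, smul_eq_mul]
  simp [a.ne_zero, mul_eq_zero]

lemma arc_line {C : Set (PG2 F)} (hArc : IsArc C) {W : Submodule F (Fin 3 → F)}
    (hW : Module.finrank F W = 2) : ({p : PG2 F | p.rep ∈ W} ∩ C).ncard ≤ 2 := by
  by_contra hgt
  push_neg at hgt
  rw [Set.two_lt_ncard (Set.toFinite _)] at hgt
  obtain ⟨a, ⟨haW, haC⟩, b, ⟨hbW, hbC⟩, c, ⟨hcW, hcC⟩, hab, hac, hbc⟩ := hgt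
  exact hArc a haC b hbC c hcC hab hbc hac ⟨W, hW, haW, hbW, hcW⟩

lemma finrank_ker_two {f : (Fin 3 → F) →ₗ[F] F} (hf : f ≠ 0) :
    Module.finrank F (LinearMap.ker f) = 2 := by
  have h3 : Module.finrank F (Fin 3 → F) = 3 := by simp [Module.finrank_fin_fun]
  have hrn := LinearMap.finrank_range_add_finrank_ker f
  rw [h3] at hrn
  have hle : Module.finrank F (LinearMap.range f) ≤ 1 := by
    simpa [Module.finrank_self] using Submodule.finrank_le (LinearMap.range f)
  have hne : Module.finrank F (LinearMap.range f) ≠ 0 := by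
    intro h0
    rw [Submodule.finrank_eq_zero, LinearMap.range_eq_bot] at h0
    exact hf h0
  omega

lemma Q_combo (Q : QuadraticForm F (Fin 3 → F)) (b x : Fin 3 → F) (t : F) :
    Q (b + t • x) = Q b + t * t * Q x + t * QuadraticMap.polar Q b x := by
  rw [QuadraticMap.map_add (⇑Q) b (t • x), QuadraticMap.map_smul,
    QuadraticMap.polar_smul_right]
  simp only [smul_eq_mul]

lemma two_eq_zero_iff_even : (2 : F) = 0 ↔ Even (Fintype.card F) := by
  have hp : (ringChar F).Prime := by
    have : CharP F (ringChar F) := ringChar.charP F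
    exact CharP.char_is_prime F (ringChar F)
  rw [Nat.even_iff, ← FiniteField.even_card_iff_char_two]
  constructor
  · intro h2
    have hd : ringChar F ∣ 2 := by
      have := (ringChar.spec F 2).1 (by exact_mod_cast h2)
      exact this
    rcases (Nat.Prime.eq_one_or_self_of_dvd Nat.prime_two _ hd).symm.imp id id with h | h
    · exact h
    · exact absurd h hp.ne_one
  · intro h2
    have : ((2 : ℕ) : F) = 0 := (ringChar.spec F 2).2 (h2 ▸ dvd_refl _)
    exact_mod_cast this

lemma isNucleus_of_polar_zero (Q : QuadraticForm F (Fin 3 → F)) {C : Set (PG2 F)}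
    (hCQ : C = {p : PG2 F | Q p.rep = 0}) (hArc : IsArc C) (hC2 : 1 < C.ncard)
    (P : PG2 F) (hP : ∀ x, QuadraticMap.polar Q P.rep x = 0) : IsNucleus C P := by
  intro L hL
  obtain ⟨⟨W, hW2, rfl⟩, hL1⟩ := hL
  obtain ⟨B, hB⟩ := Set.ncard_eq_one.1 hL1
  have hBL : B ∈ ({p : PG2 F | p.rep ∈ W} ∩ C) := by rw [hB]; exact rfl
  obtain ⟨hBW, hBC⟩ := hBL
  have hQb : Q B.rep = 0 := by rw [hCQ] at hBC; exact hBC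
  -- every point of `W` is polar-orthogonal to `b`
  have key : ∀ x ∈ W, QuadraticMap.polar Q B.rep x = 0 := by
    intro x hxW
    by_cases hli : LinearIndependent F ![x, B.rep]
    · have hx0 : x ≠ 0 := hli.ne_zero 0
      have hQx : Q x ≠ 0 := by
        intro hQx
        have hmem : Projectivization.mk F x hx0 ∈ ({p : PG2 F | p.rep ∈ W} ∩ C) := by
          constructor
          · exact (mk_rep_mem_iff hx0).2 hxW
          · rw [hCQ]; exact (mk_Q_zero_iff Q hx0).2 hQx
        rw [hB, Set.mem_singleton_iff] at hmem
        have hmm := hmem.trans (Projectivization.mk_rep B).symm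
        rw [Projectivization.mk_eq_mk_iff] at hmm
        obtain ⟨a, ha⟩ := hmm
        rw [linearIndependent_fin2] at hli
        exact hli.2 ((a : F)) (by simpa [Units.smul_def] using ha)
      set t : F := -(QuadraticMap.polar Q B.rep x) / Q x with ht
      have hQy : Q (B.rep + t • x) = 0 := by
        rw [Q_combo, hQb, ht]
        field_simp
        ring
      by_cases ht0 : t = 0
      · have ht0' : -QuadraticMap.polar (⇑Q) (Projectivization.rep B) x / Q x = 0 := ht0
        rw [div_eq_zero_iff, neg_eq_zero] at ht0'
        exact ht0'.resolve_right hQx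
      · have hy0 : B.rep + t • x ≠ 0 := by
          intro h0
          rw [LinearIndependent.pair_iff] at hli
          have := hli t 1 (by rw [← h0]; module)
          simp at this
        have hmem : Projectivization.mk F _ hy0 ∈ ({p : PG2 F | p.rep ∈ W} ∩ C) := by
          constructor
          · exact (mk_rep_mem_iff hy0).2 (W.add_mem hBW (W.smul_mem t hxW))
          · rw [hCQ]; exact (mk_Q_zero_iff Q hy0).2 hQy
        rw [hB, Set.mem_singleton_iff] at hmem
        have hmm := hmem.trans (Projectivization.mk_rep B).symm
        rw [Projectivization.mk_eq_mk_iff] at hmm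
        obtain ⟨a, ha⟩ := hmm
        rw [Units.smul_def] at ha
        rw [LinearIndependent.pair_iff] at hli
        have := hli t (1 - (a : F)) (by linear_combination (norm := module) -ha)
        exact absurd this.1 ht0
    · have hb0 : B.rep ≠ 0 := Projectivization.rep_nonzero B
      rw [linearIndependent_fin2] at hli
      push_neg at hli
      simp only [Matrix.cons_val_one, Matrix.head_cons, Matrix.cons_val_zero] at hli
      obtain ⟨a, ha⟩ := hli hb0
      rw [← ha, QuadraticMap.polar_smul_right, QuadraticMap.polar_self, hQb]
      simp
  -- the polar functional of `b` is nonzero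
  have hfb : (QuadraticMap.polarBilin Q) B.rep ≠ 0 := by
    intro hfb0
    obtain ⟨X, hXC, hXB⟩ := Set.exists_ne_of_one_lt_ncard hC2 B
    have hli := li_of_ne hXB.symm  -- ![B.rep, X.rep]
    have hQx : Q X.rep = 0 := by rw [hCQ] at hXC; exact hXC
    have hpol : QuadraticMap.polar Q B.rep X.rep = 0 := by
      have := congrArg (fun g => g X.rep) hfb0
      simpa [QuadraticMap.polarBilin_apply_apply] using this
    have hz0 : B.rep + X.rep ≠ 0 := by
      intro h0
      rw [LinearIndependent.pair_iff] at hli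
      have := hli 1 1 (by rw [← h0]; module)
      simp at this
    have hQz : Q (B.rep + X.rep) = 0 := by
      have := Q_combo Q B.rep X.rep 1
      simpa [hQb, hQx, hpol] using this
    set Z := Projectivization.mk F _ hz0 with hZ
    have hZC : Z ∈ C := by rw [hCQ]; exact (mk_Q_zero_iff Q hz0).2 hQz
    have hliBX := hli
    have hBZ : B ≠ Z := by
      intro h
      have hmm := (Projectivization.mk_rep B).trans h
      rw [hZ, Projectivization.mk_eq_mk_iff] at hmm
      obtain ⟨a, ha⟩ := hmm
      rw [Units.smul_def] at ha
      rw [LinearIndependent.pair_iff] at hliBX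
      have := hliBX ((a : F) - 1) ((a : F)) (by linear_combination (norm := module) ha)
      have h2 : (a : F) = 0 := this.2
      exact a.ne_zero (by exact_mod_cast h2)
    have hliBX2 := hli
    have hXZ : X ≠ Z := by
      intro h
      have hmm := (Projectivization.mk_rep X).trans h
      rw [hZ, Projectivization.mk_eq_mk_iff] at hmm
      obtain ⟨a, ha⟩ := hmm
      rw [Units.smul_def] at ha
      rw [LinearIndependent.pair_iff] at hliBX2
      have := hliBX2 ((a : F)) ((a : F) - 1) (by linear_combination (norm := module) ha)
      exact a.ne_zero (by exact_mod_cast this.1)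
    have hcol : Collinear3 B X Z := by
      refine ⟨Submodule.span F {B.rep, X.rep}, finrank_span_pair hli, ?_, ?_, ?_⟩
      · exact Submodule.subset_span (by simp)
      · exact Submodule.subset_span (by simp)
      · rw [hZ]
        exact (mk_rep_mem_iff hz0).2
          (Submodule.add_mem _ (Submodule.subset_span (by simp))
            (Submodule.subset_span (by simp)))
    exact hArc B hBC X hXC Z hZC hXB.symm hXZ hBZ hcol
  have hker : Module.finrank F (LinearMap.ker ((QuadraticMap.polarBilin Q) B.rep)) = 2 :=
    finrank_ker_two hfb
  have hWker : W = LinearMap.ker ((QuadraticMap.polarBilin Q) B.rep) := by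
    apply Submodule.eq_of_le_of_finrank_eq
    · intro x hx
      rw [LinearMap.mem_ker, QuadraticMap.polarBilin_apply_apply]
      exact key x hx
    · rw [hW2, hker]
  show P.rep ∈ W
  rw [hWker, LinearMap.mem_ker, QuadraticMap.polarBilin_apply_apply,
    QuadraticMap.polar_comm]
  exact hP B.rep

lemma Mset_not_mem_C {C : Set (PG2 F)} {P : PG2 F} (hP : P ∈ Mset C) : P ∉ C := by
  unfold Mset at hP
  split_ifs at hP with h
  · exact hP.1.2
  · exact hP.2

lemma exists_polar_ne (Q : QuadraticForm F (Fin 3 → F)) {C : Set (PG2 F)}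
    (hCQ : C = {p : PG2 F | Q p.rep = 0}) (hArc : IsArc C) (hC2 : 1 < C.ncard)
    {P : PG2 F} (hP : P ∈ Mset C) : (QuadraticMap.polarBilin Q) P.rep ≠ 0 := by
  intro hf0
  have hPC : P ∉ C := Mset_not_mem_C hP
  have hQp : Q P.rep ≠ 0 := by
    intro h
    exact hPC (by rw [hCQ]; exact h)
  have hpol : ∀ x, QuadraticMap.polar Q P.rep x = 0 := by
    intro x
    have := congrArg (fun g => g x) hf0
    simpa [QuadraticMap.polarBilin_apply_apply] using this
  by_cases heven : Even (Fintype.card F)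
  · have hnuc : IsNucleus C P := isNucleus_of_polar_zero Q hCQ hArc hC2 P hpol
    unfold Mset at hP
    rw [if_pos heven] at hP
    exact hP.2 hnuc
  · have h2 : (2 : F) ≠ 0 := fun h => heven (two_eq_zero_iff_even.1 h)
    have := hpol P.rep
    rw [QuadraticMap.polar_self] at this
    have h2Q : (2 : F) * Q P.rep = 0 := by
      rw [two_mul]
      simpa [two_smul] using this
    rcases mul_eq_zero.1 h2Q with h | h
    · exact h2 h
    · exact hQp h

lemma claimC (Q : QuadraticForm F (Fin 3 → F)) {C K : Set (PG2 F)}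
    (hCQ : C = {p : PG2 F | Q p.rep = 0}) (hArc : IsArc C) (hC2 : 1 < C.ncard)
    (hK : K ⊆ C) {w : ℕ} (hw : K.ncard = w) {P : PG2 F}
    (hPM : P ∈ Mset C) (hPnc : ¬ Covered K P) :
    w - 2 ≤ ((Set.toFinite (C \ K)).toFinset.filter
      (fun A => Covered (insert A K) P)).card := by
  have hPC : P ∉ C := Mset_not_mem_C hPM
  have hQp : Q P.rep ≠ 0 := fun h => hPC (by rw [hCQ]; exact h)
  have hfP : (QuadraticMap.polarBilin Q) P.rep ≠ 0 := exists_polar_ne Q hCQ hArc hC2 hPM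
  set Kfin := (Set.toFinite K).toFinset with hKfin
  have hKcard : Kfin.card = w := by
    rw [← hw, Set.ncard_eq_toFinset_card K (Set.toFinite K)]
  set T := Kfin.filter (fun B => QuadraticMap.polar Q P.rep B.rep = 0) with hT
  have hT2 : T.card ≤ 2 := by
    have hsub : (↑T : Set (PG2 F)) ⊆
        ({p : PG2 F | p.rep ∈ LinearMap.ker ((QuadraticMap.polarBilin Q) P.rep)} ∩ C) := by
      intro B hB
      simp only [hT, Finset.coe_filter, Set.mem_setOf_eq] at hB
      obtain ⟨hBK, hBpol⟩ := hB
      refine ⟨?_, hK ((Set.Finite.mem_toFinset _).1 hBK)⟩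
      rw [Set.mem_setOf_eq, LinearMap.mem_ker, QuadraticMap.polarBilin_apply_apply]
      exact hBpol
    calc T.card = (↑T : Set (PG2 F)).ncard := (Set.ncard_coe_finset T).symm
      _ ≤ _ := Set.ncard_le_ncard hsub (Set.toFinite _)
      _ ≤ 2 := arc_line hArc (finrank_ker_two hfP)
  -- the new-point map
  set g : PG2 F → PG2 F := fun B =>
    if h : B.rep + (-(QuadraticMap.polar Q B.rep P.rep) / Q P.rep) • P.rep ≠ 0 then
      Projectivization.mk F _ h else B with hg
  -- facts for B ∈ Kfin \ T
  have hfacts : ∀ B ∈ Kfin \ T,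
      ∃ h : B.rep + (-(QuadraticMap.polar Q B.rep P.rep) / Q P.rep) • P.rep ≠ 0,
      g B = Projectivization.mk F _ h ∧
      -(QuadraticMap.polar Q B.rep P.rep) / Q P.rep ≠ 0 ∧
      B ∈ K ∧ B ≠ P ∧ g B ∈ C ∧ g B ≠ B ∧ Collinear3 (g B) B P ∧ g B ∉ K := by
    intro B hB
    rw [Finset.mem_sdiff] at hB
    obtain ⟨hBKf, hBT⟩ := hB
    have hBK : B ∈ K := (Set.Finite.mem_toFinset _).1 hBKf
    have hBC : B ∈ C := hK hBK
    have hQB : Q B.rep = 0 := by rw [hCQ] at hBC; exact hBC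
    have hBP : B ≠ P := fun h => hPC (h ▸ hBC)
    have hli : LinearIndependent F ![B.rep, P.rep] := li_of_ne hBP
    have hpolB : QuadraticMap.polar Q P.rep B.rep ≠ 0 := by
      intro h
      exact hBT (Finset.mem_filter.2 ⟨hBKf, h⟩)
    set t : F := -(QuadraticMap.polar Q B.rep P.rep) / Q P.rep with htdef
    have ht0 : t ≠ 0 := by
      rw [htdef]
      rw [div_ne_zero_iff, neg_ne_zero, QuadraticMap.polar_comm]
      exact ⟨hpolB, hQp⟩
    have hv0 : B.rep + t • P.rep ≠ 0 := by
      intro h0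
      rw [LinearIndependent.pair_iff] at hli
      have := hli 1 t (by rw [← h0]; module)
      simpa using this.1
    have hgB : g B = Projectivization.mk F _ hv0 := by
      rw [hg]; exact dif_pos hv0
    have hQv : Q (B.rep + t • P.rep) = 0 := by
      rw [Q_combo, hQB, htdef]
      field_simp
      ring
    have hgC : g B ∈ C := by
      rw [hgB, hCQ]
      exact (mk_Q_zero_iff Q hv0).2 hQv
    have hgnB : g B ≠ B := by
      rw [hgB]
      intro h
      have hmm := h.trans (Projectivization.mk_rep B).symm
      rw [Projectivization.mk_eq_mk_iff] at hmm
      obtain ⟨a, ha⟩ := hmm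
      rw [Units.smul_def] at ha
      rw [LinearIndependent.pair_iff] at hli
      have := hli (1 - (a : F)) t (by linear_combination (norm := module) -ha)
      exact ht0 this.2
    have hcol : Collinear3 (g B) B P := by
      refine ⟨Submodule.span F {B.rep, P.rep}, finrank_span_pair hli, ?_, ?_, ?_⟩
      · rw [hgB]
        exact (mk_rep_mem_iff hv0).2
          (Submodule.add_mem _ (Submodule.subset_span (by simp))
            (Submodule.smul_mem _ _ (Submodule.subset_span (by simp))))
      · exact Submodule.subset_span (by simp)
      · exact Submodule.subset_span (by simp)
    have hgK : g B ∉ K := by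
      intro hmem
      exact hPnc ⟨g B, hmem, B, hBK, hgnB, hcol⟩
    exact ⟨hv0, hgB, ht0, hBK, hBP, hgC, hgnB, hcol, hgK⟩
  have hmaps : ∀ B ∈ Kfin \ T, g B ∈ (Set.toFinite (C \ K)).toFinset.filter
      (fun A => Covered (insert A K) P) := by
    intro B hB
    obtain ⟨hv0, hgB, ht0, hBK, hBP, hgC, hgnB, hcol, hgK⟩ := hfacts B hB
    refine Finset.mem_filter.2 ⟨(Set.Finite.mem_toFinset _).2 ⟨hgC, hgK⟩, ?_⟩
    exact ⟨g B, Set.mem_insert _ _, B, Set.mem_insert_of_mem _ hBK, hgnB, hcol⟩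
  have hinj : Set.InjOn g ↑(Kfin \ T) := by
    intro B hB B' hB' hgg
    by_contra hne
    obtain ⟨hv0, hgB, ht0, hBK, hBP, -, -, -, -⟩ := hfacts B hB
    obtain ⟨hv0', hgB', ht0', hBK', hBP', -, -, -, -⟩ := hfacts B' hB'
    have hliBB' : LinearIndependent F ![B.rep, B'.rep] := li_of_ne hne
    rw [hgB, hgB', Projectivization.mk_eq_mk_iff] at hgg
    obtain ⟨a, ha⟩ := hgg
    rw [Units.smul_def, smul_add, smul_smul] at ha
    set t : F := -(QuadraticMap.polar Q B.rep P.rep) / Q P.rep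
    set t' : F := -(QuadraticMap.polar Q B'.rep P.rep) / Q P.rep
    set s : F := t - (a : F) * t' with hs
    have key : s • P.rep = (a : F) • B'.rep - B.rep := by
      rw [hs]
      linear_combination (norm := module) -ha
    by_cases hs0 : s = 0
    · rw [hs0, zero_smul] at key
      rw [LinearIndependent.pair_iff] at hliBB'
      have := hliBB' (-1) ((a : F)) (by linear_combination (norm := module) -key)
      simpa using this.1
    · have hPspan : P.rep ∈ Submodule.span F {B.rep, B'.rep} := by
        have hPrep : P.rep = (1 / s) • ((a : F) • B'.rep - B.rep) := by
          rw [← key, smul_smul, one_div, inv_mul_cancel₀ hs0, one_smul]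
        rw [Submodule.mem_span_pair]
        exact ⟨-(1 / s), (1 / s) * (a : F), by rw [hPrep]; module⟩
      exact hPnc ⟨B, hBK, B', hBK', hne,
        Submodule.span F {B.rep, B'.rep}, finrank_span_pair hliBB',
        Submodule.subset_span (by simp), Submodule.subset_span (by simp), hPspan⟩
  have hcardle := Finset.card_le_card_of_injOn g hmaps hinj
  have hTsub : T ⊆ Kfin := Finset.filter_subset _ _
  rw [Finset.card_sdiff_of_subset hTsub, hKcard] at hcardle
  omega

/-- One step of the greedy algorithm: some point `A ∈ C \ K` newly covers at
least the average number `⌈(w-2)·#U/(q+1-w)⌉` of uncovered points. -/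
theorem greedy_step (q : ℕ) (hq : Fintype.card F = q)
    (C : Set (PG2 F)) (hC : IsConic C)
    (K : Set (PG2 F)) (hK : K ⊆ C) (w : ℕ) (hw : K.ncard = w) (hwq : 2 * w < q + 3)
    (U : Set (PG2 F)) (hU : U = {P ∈ Mset C | ¬ Covered K P}) :
    ∃ A ∈ C \ K,
      ⌈(((w : ℚ) - 2) * (U.ncard : ℚ)) / ((q : ℚ) + 1 - (w : ℚ))⌉ ≤
        ({P ∈ U | Covered (insert A K) P}.ncard : ℤ) := by
  obtain ⟨⟨Q, hCQ⟩, hArc, hCcard⟩ := hC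
  have hq2 : 2 ≤ q := by rw [← hq]; exact Fintype.one_lt_card
  have hC2 : 1 < C.ncard := by rw [hCcard, hq]; omega
  have hwq' : w ≤ q := by omega
  have hCK : (C \ K).ncard = q + 1 - w := by
    rw [Set.ncard_diff hK (Set.toFinite K), hCcard, hq, hw]
  set 𝒜 := (Set.toFinite (C \ K)).toFinset with h𝒜
  have h𝒜card : 𝒜.card = q + 1 - w := by
    rw [← hCK, Set.ncard_eq_toFinset_card]
  have h𝒜ne : 𝒜.Nonempty := Finset.card_pos.1 (by omega)
  set Ufin := (Set.toFinite U).toFinset with hUfin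
  have key : ∀ A : PG2 F, {P ∈ U | Covered (insert A K) P}.ncard
      = (Ufin.filter (fun P => Covered (insert A K) P)).card := by
    intro A
    have : {P ∈ U | Covered (insert A K) P}
        = ↑(Ufin.filter (fun P => Covered (insert A K) P)) := by
      ext P
      simp [Set.Finite.mem_toFinset, hUfin]
    rw [this, Set.ncard_coe_finset]
  have claimB : ∀ P ∈ Ufin, w - 2 ≤ (𝒜.filter (fun A => Covered (insert A K) P)).card := by
    intro P hP
    rw [Set.Finite.mem_toFinset, hU] at hP
    exact claimC Q hCQ hArc hC2 hK hw hP.1 hP.2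
  have hsum : Ufin.card * (w - 2) ≤
      ∑ P ∈ Ufin, (𝒜.filter (fun A => Covered (insert A K) P)).card := by
    calc Ufin.card * (w - 2) = ∑ _P ∈ Ufin, (w - 2) := by
          rw [Finset.sum_const, smul_eq_mul]
      _ ≤ _ := Finset.sum_le_sum claimB
  have hswap : ∑ P ∈ Ufin, (𝒜.filter (fun A => Covered (insert A K) P)).card
      = ∑ A ∈ 𝒜, (Ufin.filter (fun P => Covered (insert A K) P)).card := by
    simp_rw [Finset.card_filter]
    rw [Finset.sum_comm]
  obtain ⟨A, hA𝒜, hAmax⟩ := 𝒜.exists_max_image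
    (fun A => (Ufin.filter (fun P => Covered (insert A K) P)).card) h𝒜ne
  set m := (Ufin.filter (fun P => Covered (insert A K) P)).card with hm
  have hbound : Ufin.card * (w - 2) ≤ (q + 1 - w) * m := by
    calc Ufin.card * (w - 2) ≤ _ := hsum
      _ = _ := hswap
      _ ≤ ∑ _A ∈ 𝒜, m := Finset.sum_le_sum fun A' hA' => hAmax A' hA'
      _ = 𝒜.card * m := by rw [Finset.sum_const, smul_eq_mul]
      _ = (q + 1 - w) * m := by rw [h𝒜card]
  refine ⟨A, (Set.Finite.mem_toFinset _).1 hA𝒜, ?_⟩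
  rw [key A, ← hm]
  have hu : U.ncard = Ufin.card := Set.ncard_eq_toFinset_card _ _
  have hden : (q : ℚ) + 1 - (w : ℚ) = ((q + 1 - w : ℕ) : ℚ) := by
    rw [Nat.cast_sub (by omega : w ≤ q + 1)]
    push_cast
    ring
  have hdenpos : (0 : ℚ) < (q : ℚ) + 1 - (w : ℚ) := by
    rw [hden]
    exact_mod_cast Nat.pos_of_ne_zero (by omega)
  rw [Int.ceil_le, div_le_iff₀ hdenpos]
  have h1 : ((w : ℚ) - 2) ≤ ((w - 2 : ℕ) : ℚ) := by
    rcases le_total 2 w with h | h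
    · rw [Nat.cast_sub h]
      push_cast
      linarith
    · have hw0 : w - 2 = 0 := by omega
      rw [hw0]
      have : (w : ℚ) ≤ 2 := by exact_mod_cast h
      simp only [Nat.cast_zero]
      linarith
  have h2 : ((w - 2 : ℕ) : ℚ) * (U.ncard : ℚ) ≤ ((q + 1 - w : ℕ) : ℚ) * (m : ℚ) := by
    rw [hu]
    have := hbound
    have hcast : ((Ufin.card * (w - 2) : ℕ) : ℚ) ≤ (((q + 1 - w) * m : ℕ) : ℚ) := by
      exact_mod_cast this
    push_cast at hcast
    linarith
  calc ((w : ℚ) - 2) * (U.ncard : ℚ) ≤ ((w - 2 : ℕ) : ℚ) * (U.ncard : ℚ) :=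
        mul_le_mul_of_nonneg_right h1 (by positivity)
    _ ≤ ((q + 1 - w : ℕ) : ℚ) * (m : ℚ) := h2
    _ = ((m : ℤ) : ℚ) * ((q : ℚ) + 1 - (w : ℚ)) := by rw [hden]; push_cast; ring
end
end

section
/- Let q ≥ 5 and let t(q) denote the smallest size of an almost complete subset of a nondegenerate conic C in PG(2,q). If ξ ≥ 1 is real and w is an integer with w < (q+3)/2 satisfying ∏_{i=1}^{w} (1 - (i-2)/(q+1-i)) ≤ ξ/q^2, then t(q) ≤ w + 1 + ξ. -/
open scoped Classical

noncomputable section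

variable {F : Type} [Field F] [Fintype F]

/-! Greedy construction. Start from one point of `C` and repeatedly add the point `A ∈ C \ K`
covering the most points of `U(K)`, the points of `M_q` not yet covered by `K`. The points of
tangency of the tangents through `P ∈ M_q` lie on the polar line of `P` (which exists since `P` is
not the nucleus), so there are at most two of them; every other `B ∈ K` gives a second point of
`C` on `PB`, and these are distinct while `P` is uncovered. Hence `P` is covered by `K ∪ {A}` for
at least `|K| - 2` of the `q + 1 - |K|` candidates `A`, and averaging gives
`#U(K ∪ {A}) ≤ #U(K) (1 - (|K| - 2)/(q + 1 - |K|))`. After `w` steps at most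
`q² ∏ ≤ ξ` points remain uncovered, and each is covered by adding one more point of `C`. Should
this exhaust `C`, then `C` minus any point is already almost complete, so `t(q) ≤ q`; that trivial
bound also settles `w ≤ 1`, where the product is at least `1`. -/

open Module Submodule QuadraticMap
open scoped LinearAlgebra.Projectivization

namespace QuadraticMap

variable {K V : Type*} [Field K] [AddCommGroup V] [Module K V] (Q : QuadraticForm K V)

lemma polar_self_eq_zero {v : V} (hv : Q v = 0) : polar Q v v = 0 := by
  rw [polar_self, hv, smul_zero]

lemma finrank_ker_polarBilin_add_one [FiniteDimensional K V] {v x : V} (hx : polar Q v x ≠ 0) :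
    finrank K (LinearMap.ker (polarBilin Q v)) + 1 = finrank K V :=
  Module.Dual.finrank_ker_add_one_of_ne_zero fun h => hx (by simpa using LinearMap.congr_fun h x)

end QuadraticMap

namespace Projectivization

variable {K V : Type*} [Field K] [AddCommGroup V] [Module K V]

lemma mem_projectivization_of_rep_mem {W : Submodule K V} {x : ℙ K V} (h : x.rep ∈ W) :
    x ∈ W.projectivization := by
  simpa using (W.mk_mem_projectivization_iff x.rep_nonzero).2 h

lemma rep_mk_mem {W : Submodule K V} {v : V} (hv : v ≠ 0) (hvW : v ∈ W) :
    (mk K v hv).rep ∈ W := by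
  obtain ⟨a, ha⟩ := exists_smul_eq_mk_rep K v hv
  exact ha ▸ W.smul_of_tower_mem a hvW

lemma linearIndependent_rep_pair {a b : ℙ K V} (h : a ≠ b) :
    LinearIndependent K ![a.rep, b.rep] := by
  have := (independent_iff.1 ((independent_pair_iff_ne a b).2 h))
  rwa [show Projectivization.rep ∘ ![a, b] = ![a.rep, b.rep] by ext i; fin_cases i <;> rfl] at this

lemma finrank_span_rep_pair {a b : ℙ K V} (h : a ≠ b) :
    finrank K (span K {a.rep, b.rep}) = 2 := by
  rw [← Matrix.range_cons_cons_empty _ _ ![], finrank_span_eq_card (linearIndependent_rep_pair h)]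
  simp

variable (Q : QuadraticForm K V)

lemma map_rep_mk_eq_zero {v : V} (hv : v ≠ 0) (h : Q v = 0) : Q (mk K v hv).rep = 0 := by
  obtain ⟨a, ha⟩ := exists_smul_eq_mk_rep K v hv
  rw [← ha, Units.smul_def, QuadraticMap.map_smul, h, smul_zero]


lemma polar_eq_zero_of_forall_eq {B : ℙ K V} (hB : Q B.rep = 0) {W : Submodule K V}
    (hW : ∀ A : ℙ K V, Q A.rep = 0 → A.rep ∈ W → A = B) (hBW : B.rep ∈ W) {u : V} (hu : u ∈ W) :
    polar Q B.rep u = 0 := by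
  by_contra hβ
  -- `z` is the second intersection of the line `⟨B, u⟩` with the quadric.
  set z := polar Q B.rep u • u + (-Q u) • B.rep
  have hQz : Q z = 0 := by
    rw [QuadraticMap.map_add Q, QuadraticMap.map_smul, QuadraticMap.map_smul, hB, polar_smul_left,
      polar_smul_right, polar_comm Q u]
    simp only [smul_eq_mul]
    ring
  have hBz : polar Q B.rep z = polar Q B.rep u ^ 2 := by
    rw [polar_add_right, polar_smul_right, polar_smul_right, polar_self_eq_zero Q hB]
    simp only [smul_eq_mul]
    ring
  have hz : z ≠ 0 := fun h => hβ (by simpa [h] using hBz.symm)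
  have hzB := hW _ (map_rep_mk_eq_zero Q hz hQz)
    (rep_mk_mem hz (W.add_mem (W.smul_mem _ hu) (W.smul_mem _ hBW)))
  obtain ⟨a, ha⟩ := (mk_eq_mk_iff' K z B.rep hz B.rep_nonzero).1 (hzB.trans B.mk_rep.symm)
  rw [← ha, polar_smul_right, polar_self_eq_zero Q hB, smul_zero] at hBz
  exact hβ (pow_eq_zero_iff two_ne_zero |>.1 hBz.symm)

lemma exists_third_of_polar_eq_zero {X B : ℙ K V} (hX : Q X.rep = 0) (hB : Q B.rep = 0)
    (hXB : X ≠ B) (hpolar : polar Q X.rep B.rep = 0) :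
    ∃ M : ℙ K V, Q M.rep = 0 ∧ M ≠ X ∧ M ≠ B ∧ M.rep ∈ span K {X.rep, B.rep} := by
  have hind := LinearIndependent.pair_iff.1 (linearIndependent_rep_pair hXB)
  have hv : X.rep + B.rep ≠ 0 := fun h => one_ne_zero (hind 1 1 (by simpa using h)).1
  refine ⟨mk K _ hv, map_rep_mk_eq_zero Q hv ?_, fun h => ?_, fun h => ?_,
    rep_mk_mem hv (add_mem (subset_span (by simp)) (subset_span (by simp)))⟩
  · rw [QuadraticMap.map_add Q, hX, hB, hpolar, add_zero, add_zero]
  · obtain ⟨a, ha⟩ := (mk_eq_mk_iff' K _ _ hv X.rep_nonzero).1 (h.trans X.mk_rep.symm)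
    exact one_ne_zero (hind (1 - a) 1 (by rw [sub_smul, ha]; module)).2
  · obtain ⟨a, ha⟩ := (mk_eq_mk_iff' K _ _ hv B.rep_nonzero).1 (h.trans B.mk_rep.symm)
    exact one_ne_zero (hind 1 (1 - a) (by rw [sub_smul, ha]; module)).1

end Projectivization

open Projectivization

section PlaneOverField

variable {K : Type} [Field K]

lemma Collinear3.of_mem_span {a b c : PG2 K} (hac : a ≠ c) (hb : b.rep ∈ span K {a.rep, c.rep}) :
    Collinear3 a b c :=
  ⟨_, finrank_span_rep_pair hac, subset_span (by simp), hb, subset_span (by simp)⟩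

lemma Collinear3.trans_of_ne {A B B' P : PG2 K} (hAP : A ≠ P) (h : Collinear3 B A P)
    (h' : Collinear3 B' A P) : Collinear3 B B' P := by
  obtain ⟨W, hW, hB, hA, hP⟩ := h
  obtain ⟨W', hW', hB', hA', hP'⟩ := h'
  have hWW' : W' = W := line_unique hAP W' W hW' hW (mem_projectivization_of_rep_mem hA')
    (mem_projectivization_of_rep_mem hP') (mem_projectivization_of_rep_mem hA)
    (mem_projectivization_of_rep_mem hP)
  exact ⟨W, hW, hB, hWW' ▸ hB', hP⟩

lemma IsArc.card_le_two {C : Set (PG2 K)} (hC : IsArc C) {W : Submodule K (Fin 3 → K)}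
    (hW : finrank K W = 2) {T : Finset (PG2 K)} (hTC : ∀ B ∈ T, B ∈ C)
    (hTW : ∀ B ∈ T, B.rep ∈ W) : T.card ≤ 2 := by
  by_contra! h
  obtain ⟨a, ha, b, hb, c, hc, hab, hac, hbc⟩ := Finset.two_lt_card.1 h
  exact hC a (hTC a ha) b (hTC b hb) c (hTC c hc) hab hbc hac
    ⟨W, hW, hTW a ha, hTW b hb, hTW c hc⟩

lemma finrank_ker_polarBilin {Q : QuadraticForm K (Fin 3 → K)} {v x : Fin 3 → K}
    (hx : polar Q v x ≠ 0) : finrank K (LinearMap.ker (polarBilin Q v)) = 2 := by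
  have := finrank_ker_polarBilin_add_one Q hx
  rw [finrank_fin_fun] at this
  omega

lemma Covered.mono {S S' : Set (PG2 K)} (h : S ⊆ S') {P : PG2 K} (hc : Covered S P) :
    Covered S' P := by
  obtain ⟨a, ha, b, hb, hab, hcol⟩ := hc
  exact ⟨a, h ha, b, h hb, hab, hcol⟩

def Tangential (C : Set (PG2 K)) (P B : PG2 K) : Prop :=
  ∀ A ∈ C, A ≠ B → ¬ Collinear3 B A P

variable {C : Set (PG2 K)} {Q : QuadraticForm K (Fin 3 → K)}

lemma Tangential.polar_eq_zero (hCQ : C = {p : PG2 K | Q p.rep = 0}) {P B : PG2 K} (hB : B ∈ C)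
    (hBP : B ≠ P) (ht : Tangential C P B) : polar Q B.rep P.rep = 0 := by
  subst hCQ
  refine polar_eq_zero_of_forall_eq Q hB (W := span K {B.rep, P.rep}) (fun A hA hAW => ?_)
    (subset_span (by simp)) (subset_span (by simp))
  by_contra hAB
  exact ht A hA hAB (Collinear3.of_mem_span hBP hAW)

lemma exists_polar_ne_zero_of_mem (hCQ : C = {p : PG2 K | Q p.rep = 0}) (hArc : IsArc C)
    (hC : 1 < C.ncard) {B : PG2 K} (hB : B ∈ C) : ∃ x, polar Q B.rep x ≠ 0 := by
  by_contra! h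
  obtain ⟨X, hX, hXB⟩ := Set.exists_ne_of_one_lt_ncard hC B
  subst hCQ
  obtain ⟨M, hM, hMX, hMB, hM_span⟩ :=
    exists_third_of_polar_eq_zero Q hX hB hXB (by rw [polar_comm]; exact h _)
  exact hArc X hX M hM B hB hMX.symm hMB hXB (Collinear3.of_mem_span hXB hM_span)

lemma isNucleus_of_polar_eq_zero (hCQ : C = {p : PG2 K | Q p.rep = 0}) (hArc : IsArc C)
    (hC : 1 < C.ncard) {P : PG2 K} (hP : ∀ x, polar Q P.rep x = 0) : IsNucleus C P := by
  rintro L ⟨⟨W, hW, rfl⟩, hL⟩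
  obtain ⟨B, hLB⟩ := Set.ncard_eq_one.1 hL
  have hB : B ∈ {p : PG2 K | p.rep ∈ W} ∩ C := hLB ▸ rfl
  obtain ⟨x, hx⟩ := exists_polar_ne_zero_of_mem hCQ hArc hC hB.2
  have hQB : Q B.rep = 0 := by simpa [hCQ] using hB.2
  have hW_ker : W ≤ LinearMap.ker (polarBilin Q B.rep) := fun u hu =>
    polar_eq_zero_of_forall_eq Q hQB (fun A hA hAW => by
      have hA' : A ∈ {p : PG2 K | p.rep ∈ W} ∩ C := ⟨hAW, hCQ ▸ hA⟩
      rwa [hLB] at hA') hB.1 hu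
  have hW_eq := eq_of_le_of_finrank_le hW_ker (by rw [finrank_ker_polarBilin hx, hW])
  show P.rep ∈ W
  rw [hW_eq, LinearMap.mem_ker, polarBilin_apply_apply, polar_comm]
  exact hP _

end PlaneOverField

instance : Fintype (PG2 F) := Fintype.ofFinite _

lemma card_PG2 : Fintype.card (PG2 F) = Fintype.card F ^ 2 + Fintype.card F + 1 := by
  rw [Fintype.card_eq_nat_card, card_of_finrank F (Fin 3 → F) (n := 3) (by simp),
    Nat.card_eq_fintype_card]
  simp [Finset.sum_range_succ]
  ring

lemma even_card_of_two_eq_zero (h : (2 : F) = 0) : Even (Fintype.card F) := by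
  have := CharTwo.of_one_ne_zero_of_two_eq_zero one_ne_zero h
  exact Nat.even_iff.2 (FiniteField.even_card_iff_char_two.1 (ringChar.eq F 2))

section FiniteConic

variable {C : Set (PG2 F)}

lemma IsConic.one_lt_ncard (hC : IsConic C) : 1 < C.ncard := by
  rw [hC.2.2]
  have := Fintype.card_pos (α := F)
  omega

lemma IsConic.nonempty (hC : IsConic C) : C.Nonempty :=
  Set.nonempty_of_ncard_ne_zero (by have := hC.one_lt_ncard; omega)

lemma notMem_of_mem_Mset {P : PG2 F} (hP : P ∈ Mset C) : P ∉ C := by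
  unfold Mset at hP
  split_ifs at hP
  exacts [hP.1.2, hP.2]

lemma not_isNucleus_of_mem_Mset (heven : Even (Fintype.card F)) {P : PG2 F} (hP : P ∈ Mset C) :
    ¬ IsNucleus C P := by
  unfold Mset at hP
  rw [if_pos heven] at hP
  exact hP.2

lemma exists_polar_ne_zero_of_mem_Mset {Q : QuadraticForm F (Fin 3 → F)}
    (hCQ : C = {p : PG2 F | Q p.rep = 0}) (hArc : IsArc C) (hC : 1 < C.ncard) {P : PG2 F}
    (hP : P ∈ Mset C) : ∃ x, polar Q P.rep x ≠ 0 := by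
  by_contra! h
  have hQP : Q P.rep ≠ 0 := by simpa [hCQ] using notMem_of_mem_Mset hP
  -- `polar Q P P = 2 Q P`, so a point off `C` in the radical forces characteristic `2`.
  have h2 : (2 : F) = 0 := by
    have hPP := h P.rep
    rw [polar_self, nsmul_eq_mul, Nat.cast_ofNat] at hPP
    exact (mul_eq_zero.1 hPP).resolve_right hQP
  exact not_isNucleus_of_mem_Mset (even_card_of_two_eq_zero h2) hP
    (isNucleus_of_polar_eq_zero hCQ hArc hC h)

lemma IsConic.card_le_two_of_tangential (hC : IsConic C) {P : PG2 F} (hP : P ∈ Mset C)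
    {T : Finset (PG2 F)} (hT : ∀ B ∈ T, B ∈ C ∧ Tangential C P B) : T.card ≤ 2 := by
  obtain ⟨Q, hCQ⟩ := hC.1
  obtain ⟨x, hx⟩ := exists_polar_ne_zero_of_mem_Mset hCQ hC.2.1 hC.one_lt_ncard hP
  refine hC.2.1.card_le_two (finrank_ker_polarBilin hx) (fun B hB => (hT B hB).1) fun B hB => ?_
  have hBP : B ≠ P := fun h => notMem_of_mem_Mset hP (h ▸ (hT B hB).1)
  rw [LinearMap.mem_ker, polarBilin_apply_apply, polar_comm]
  exact (hT B hB).2.polar_eq_zero hCQ (hT B hB).1 hBP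

/-- Every non-tangential `B ∈ K` gives the second point of `C` on `PB`; these points are
distinct because `P` is not yet covered. -/
lemma IsConic.card_le_card_filter_covered_add_two (hC : IsConic C) {P : PG2 F} (hP : P ∈ Mset C)
    {K : Finset (PG2 F)} (hKC : ↑K ⊆ C) (hK : ¬ Covered ↑K P) :
    K.card ≤
      ((C.toFinset \ K).filter (fun A => Covered (insert A (K : Set (PG2 F))) P)).card + 2 := by
  set T := K.filter (Tangential C P)
  have hT : T.card ≤ 2 := hC.card_le_two_of_tangential hP fun B hB =>
    ⟨hKC (Finset.mem_filter.1 hB).1, (Finset.mem_filter.1 hB).2⟩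
  have hsecond : ∀ B ∈ K \ T, ∃ A ∈ C, A ≠ B ∧ Collinear3 B A P := by
    intro B hB
    obtain ⟨hBK, hBT⟩ := Finset.mem_sdiff.1 hB
    by_contra! h
    exact hBT (Finset.mem_filter.2 ⟨hBK, fun A hA hAB => h A hA hAB⟩)
  choose! f hfC hfB hf using hsecond
  have hmaps : Set.MapsTo f ↑(K \ T)
      ↑((C.toFinset \ K).filter (fun A => Covered (insert A (K : Set (PG2 F))) P)) := by
    intro B hB
    have hBK := (Finset.mem_sdiff.1 hB).1
    have hfK : f B ∉ K := fun h => hK ⟨B, hBK, f B, h, (hfB B hB).symm, hf B hB⟩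
    simp only [Finset.coe_filter, Set.mem_ofPred_eq, Finset.mem_sdiff, Set.mem_toFinset]
    exact ⟨⟨hfC B hB, hfK⟩, B, Set.mem_insert_of_mem _ hBK, f B, Set.mem_insert _ _,
      (hfB B hB).symm, hf B hB⟩
  have hinj : Set.InjOn f ↑(K \ T) := by
    intro B hB B' hB' heq
    by_contra hBB'
    have hfP : f B' ≠ P := fun h => notMem_of_mem_Mset hP (h ▸ hfC B' hB')
    exact hK ⟨B, (Finset.mem_sdiff.1 hB).1, B', (Finset.mem_sdiff.1 hB').1, hBB',
      (heq ▸ hf B hB).trans_of_ne hfP (hf B' hB')⟩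
  have := Finset.card_le_card_of_injOn f hmaps hinj
  have := Finset.card_le_card_sdiff_add_card (s := K) (t := T)
  omega

/-- The paper's `U(K)`. -/
def uncovered (C : Set (PG2 F)) (K : Finset (PG2 F)) : Finset (PG2 F) :=
  {P | P ∈ Mset C ∧ ¬ Covered (K : Set (PG2 F)) P}

lemma mem_uncovered {K : Finset (PG2 F)} {P : PG2 F} :
    P ∈ uncovered C K ↔ P ∈ Mset C ∧ ¬ Covered ↑K P := by
  simp [uncovered]

lemma IsConic.card_uncovered_le (hC : IsConic C) (K : Finset (PG2 F)) :
    (uncovered C K).card ≤ Fintype.card F ^ 2 := by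
  have hsub : uncovered C K ⊆ C.toFinsetᶜ := fun P hP => by
    simpa using notMem_of_mem_Mset (mem_uncovered.1 hP).1
  have := Finset.card_le_card hsub
  rw [Finset.card_compl, card_PG2, ← Set.ncard_eq_toFinset_card', hC.2.2] at this
  omega

lemma uncovered_insert (A : PG2 F) (K : Finset (PG2 F)) :
    uncovered C (insert A K) =
      (uncovered C K).filter (fun P => ¬ Covered (insert A (K : Set (PG2 F))) P) := by
  ext P
  simp only [mem_uncovered, Finset.mem_filter, Finset.coe_insert]
  constructor
  · rintro ⟨hM, hA⟩
    exact ⟨⟨hM, fun h => hA (h.mono (Set.subset_insert _ _))⟩, hA⟩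
  · rintro ⟨⟨hM, -⟩, hA⟩
    exact ⟨hM, hA⟩

def coverFactor (q j : ℕ) : ℝ := 1 - ((j : ℝ) - 2) / ((q : ℝ) + 1 - j)

lemma coverFactor_nonneg {q j : ℕ} (h : 2 * j < q + 3) : 0 ≤ coverFactor q j := by
  have h' : 2 * (j : ℝ) + 1 ≤ q + 3 := by exact_mod_cast h
  rw [coverFactor, sub_nonneg]
  exact div_le_one_of_le₀ (by linarith) (by linarith)

lemma one_le_coverFactor {q j : ℕ} (hj : j ≤ 2) (hjq : j ≤ q) : 1 ≤ coverFactor q j := by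
  have hj' : (j : ℝ) ≤ 2 := by exact_mod_cast hj
  have hjq' : (j : ℝ) ≤ q := by exact_mod_cast hjq
  have := div_nonpos_of_nonpos_of_nonneg (by linarith : (j : ℝ) - 2 ≤ 0)
    (by linarith : (0 : ℝ) ≤ q + 1 - j)
  rw [coverFactor]
  linarith

/-- Averaging over the `q + 1 - |K|` candidates `A ∈ C \ K`: each uncovered point is covered by
at least `|K| - 2` of them. -/
lemma IsConic.exists_card_uncovered_insert_le (hC : IsConic C) {K : Finset (PG2 F)}
    (hKC : ↑K ⊆ C) (hKq : K.card ≤ Fintype.card F) :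
    ∃ A ∈ C, A ∉ K ∧ ((uncovered C (insert A K)).card : ℝ) ≤
      (uncovered C K).card * coverFactor (Fintype.card F) K.card := by
  set D := C.toFinset \ K
  set U := uncovered C K
  set covers : PG2 F → PG2 F → Prop := fun A P => Covered (insert A (K : Set (PG2 F))) P
  have hD : (D.card : ℝ) = Fintype.card F + 1 - K.card := by
    have : D.card = Fintype.card F + 1 - K.card := by
      rw [Finset.card_sdiff_of_subset fun x hx => Set.mem_toFinset.2 (hKC hx),
        ← Set.ncard_eq_toFinset_card', hC.2.2]
    rw [this, Nat.cast_sub (by omega)]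
    push_cast
    ring
  have hDpos : (0 : ℝ) < D.card := by
    have : (K.card : ℝ) ≤ Fintype.card F := by exact_mod_cast hKq
    linarith
  have hcount : ((K.card : ℝ) - 2) * U.card ≤ ∑ A ∈ D, ((U.filter (covers A)).card : ℝ) := by
    have hswap : ∑ A ∈ D, (U.filter (covers A)).card =
        ∑ P ∈ U, (D.filter (fun A => covers A P)).card :=
      Finset.sum_card_bipartiteAbove_eq_sum_card_bipartiteBelow _
    rw [← Nat.cast_sum, hswap, Nat.cast_sum, mul_comm, ← nsmul_eq_mul, ← Finset.sum_const]
    refine Finset.sum_le_sum fun P hP => ?_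
    have := hC.card_le_card_filter_covered_add_two (mem_uncovered.1 hP).1 hKC
      (mem_uncovered.1 hP).2
    have : (K.card : ℝ) ≤ (D.filter (fun A => covers A P)).card + 2 := by
      rw [← Nat.cast_ofNat, ← Nat.cast_add]
      exact Nat.cast_le.2 this
    linarith
  obtain ⟨A, hAD, hA⟩ := Finset.exists_le_of_sum_le (Finset.card_pos.1 (by exact_mod_cast hDpos))
    (f := fun _ => ((K.card : ℝ) - 2) * U.card / D.card)
    (g := fun A => ((U.filter (covers A)).card : ℝ))
    (by rwa [Finset.sum_const, nsmul_eq_mul, mul_div_cancel₀ _ hDpos.ne'])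
  obtain ⟨hAC, hAK⟩ := Finset.mem_sdiff.1 hAD
  refine ⟨A, Set.mem_toFinset.1 hAC, hAK, ?_⟩
  have hsplit : ((U.filter (covers A)).card : ℝ) + (U.filter (fun P => ¬ covers A P)).card =
      U.card := by exact_mod_cast Finset.card_filter_add_card_filter_not _
  rw [uncovered_insert, coverFactor, ← hD]
  calc ((U.filter (fun P => ¬ covers A P)).card : ℝ)
      ≤ U.card - ((K.card : ℝ) - 2) * U.card / D.card := by linarith
    _ = U.card * (1 - ((K.card : ℝ) - 2) / D.card) := by ring

lemma IsConic.exists_card_uncovered_le_prod (hC : IsConic C) {n : ℕ}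
    (hn : 2 * n < Fintype.card F + 3) :
    ∃ K : Finset (PG2 F), ↑K ⊆ C ∧ K.card = n + 1 ∧ ((uncovered C K).card : ℝ) ≤
      (Fintype.card F : ℝ) ^ 2 * ∏ i ∈ Finset.Icc 1 n, coverFactor (Fintype.card F) i := by
  induction n with
  | zero =>
    obtain ⟨A, hA⟩ := hC.nonempty
    refine ⟨{A}, by simpa using hA, rfl, ?_⟩
    simpa using (Nat.cast_le (α := ℝ)).2 (hC.card_uncovered_le {A})
  | succ n ih =>
    obtain ⟨K, hKC, hK, hU⟩ := ih (by omega)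
    obtain ⟨A, hAC, hAK, hA⟩ :=
      hC.exists_card_uncovered_insert_le hKC (by have := Fintype.one_lt_card (α := F); omega)
    refine ⟨insert A K, by simpa using Set.insert_subset hAC hKC,
      by rw [Finset.card_insert_of_notMem hAK, hK], ?_⟩
    rw [Finset.prod_Icc_succ_top (by omega), ← mul_assoc]
    refine hA.trans ?_
    rw [hK]
    exact mul_le_mul_of_nonneg_right hU (coverFactor_nonneg (by omega))

lemma IsConic.exists_covering_subset (hC : IsConic C) {K : Finset (PG2 F)} (hKC : ↑K ⊆ C)
    (hK : 3 ≤ K.card) : ∃ S : Finset (PG2 F), ↑S ⊆ C ∧ (∀ P ∈ Mset C, Covered ↑S P) ∧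
      S.card ≤ K.card + (uncovered C K).card := by
  have hpatch : ∀ P ∈ uncovered C K, ∃ A ∈ C, Covered (insert A (K : Set (PG2 F))) P := by
    intro P hP
    have := hC.card_le_card_filter_covered_add_two (mem_uncovered.1 hP).1 hKC
      (mem_uncovered.1 hP).2
    obtain ⟨A, hA⟩ := Finset.card_pos.1 (show 0 < ((C.toFinset \ K).filter
      fun A => Covered (insert A (K : Set (PG2 F))) P).card by omega)
    simp only [Finset.mem_filter, Finset.mem_sdiff, Set.mem_toFinset] at hA
    exact ⟨A, hA.1.1, hA.2⟩
  choose! f hfC hf using hpatch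
  refine ⟨K ∪ (uncovered C K).image f, ?_, fun P hP => ?_,
    (Finset.card_union_le _ _).trans (Nat.add_le_add_left Finset.card_image_le _)⟩
  · simp only [Finset.coe_union, Finset.coe_image, Set.union_subset_iff, Set.image_subset_iff]
    exact ⟨hKC, fun P hP => hfC P hP⟩
  · by_cases hKP : Covered ↑K P
    · exact hKP.mono (by simp)
    · have hPU : P ∈ uncovered C K := mem_uncovered.2 ⟨hP, hKP⟩
      refine (hf P hPU).mono (Set.insert_subset ?_ ?_)
      · simpa using Or.inr ⟨P, hPU, rfl⟩
      · simp

lemma tAC_le_ncard {S : Set (PG2 F)} (h : IsACSubset C S) : tAC C ≤ S.ncard :=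
  Nat.sInf_le ⟨S, h, rfl⟩

lemma IsConic.isACSubset_diff_singleton (hC : IsConic C) (hq : 4 ≤ Fintype.card F) {A : PG2 F}
    (hA : A ∈ C) : IsACSubset C (C \ {A}) := by
  refine ⟨Set.sdiff_singleton_ssubset.2 hA, fun P hP => ?_⟩
  by_contra hcov
  set K := C.toFinset.erase A
  have hK : (K : Set (PG2 F)) = C \ {A} := by simp [K]
  have hcount := hC.card_le_card_filter_covered_add_two hP (hK ▸ Set.sdiff_subset) (hK ▸ hcov)
  have hKcard : K.card = Fintype.card F := by
    rw [Finset.card_erase_of_mem (by simpa using hA), ← Set.ncard_eq_toFinset_card', hC.2.2]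
    rfl
  have hfilter : ((C.toFinset \ K).filter
      (fun A => Covered (insert A (K : Set (PG2 F))) P)).card ≤ 1 :=
    (Finset.card_le_card (Finset.filter_subset _ _)).trans
      (by rw [Finset.sdiff_erase_self (by simpa using hA), Finset.card_singleton])
  omega

lemma IsConic.tAC_le_card (hC : IsConic C) (hq : 4 ≤ Fintype.card F) : tAC C ≤ Fintype.card F := by
  obtain ⟨A, hA⟩ := hC.nonempty
  calc tAC C ≤ (C \ {A}).ncard := tAC_le_ncard (hC.isACSubset_diff_singleton hq hA)
    _ = Fintype.card F := by rw [Set.ncard_sdiff_singleton_of_mem hA, hC.2.2]; rfl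

lemma IsConic.tAC_le_ncard_of_covered (hC : IsConic C) (hq : 4 ≤ Fintype.card F)
    {S : Set (PG2 F)} (hSC : S ⊆ C) (hS : ∀ P ∈ Mset C, Covered S P) : tAC C ≤ S.ncard := by
  rcases hSC.eq_or_ssubset with rfl | hSC
  · rw [hC.2.2]
    exact (hC.tAC_le_card hq).trans (Nat.le_succ _)
  · exact tAC_le_ncard ⟨hSC, hS⟩

end FiniteConic

theorem tAC_le_of_prod_le_general (q : ℕ) (hq : Fintype.card F = q) (hq5 : 5 ≤ q)
    (C : Set (PG2 F)) (hC : IsConic C)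
    (ξ : ℝ) (w : ℕ) (hwq : 2 * w < q + 3)
    (hprod : ∏ i ∈ Finset.Icc 1 w, (1 - ((i : ℝ) - 2) / ((q : ℝ) + 1 - i)) ≤ ξ / (q : ℝ) ^ 2) :
    (tAC C : ℝ) ≤ (w : ℝ) + 1 + ξ := by
  subst hq
  have hξ : (Fintype.card F : ℝ) ^ 2 * ∏ i ∈ Finset.Icc 1 w, coverFactor (Fintype.card F) i ≤ ξ :=
    (le_div_iff₀' (by positivity)).1 hprod
  rcases lt_or_ge w 2 with hw | hw
  · have hone : 1 ≤ ∏ i ∈ Finset.Icc 1 w, coverFactor (Fintype.card F) i :=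
      Finset.one_le_prod fun i hi => one_le_coverFactor (by simp at hi; omega)
        (by simp at hi; omega)
    have hq1 : (1 : ℝ) ≤ Fintype.card F := by exact_mod_cast Fintype.card_pos
    calc (tAC C : ℝ) ≤ Fintype.card F := by exact_mod_cast hC.tAC_le_card (by omega)
      _ ≤ ξ := by nlinarith
      _ ≤ w + 1 + ξ := by linarith
  · obtain ⟨K, hKC, hK, hU⟩ := hC.exists_card_uncovered_le_prod hwq
    obtain ⟨S, hSC, hS, hScard⟩ := hC.exists_covering_subset hKC (by omega)
    have htAC : tAC C ≤ S.card := by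
      simpa using hC.tAC_le_ncard_of_covered (by omega) hSC hS
    have : (tAC C : ℝ) ≤ w + 1 + (uncovered C K).card := by
      rw [hK] at hScard
      exact_mod_cast htAC.trans hScard
    linarith

/-- If `w < (q+3)/2` satisfies the product inequality
`∏_{i=1}^w (1 - (i-2)/(q+1-i)) ≤ ξ/q²`, then `t(q) ≤ w + 1 + ξ`. -/
theorem tAC_le_of_prod_le (q : ℕ) (hq : Fintype.card F = q) (hq5 : 5 ≤ q)
    (C : Set (PG2 F)) (hC : IsConic C)
    (ξ : ℝ) (hξ : 1 ≤ ξ) (w : ℕ) (hwq : 2 * w < q + 3)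
    (hprod : ∏ i ∈ Finset.Icc 1 w, (1 - ((i : ℝ) - 2) / ((q : ℝ) + 1 - i)) ≤ ξ / (q : ℝ) ^ 2) :
    (tAC C : ℝ) ≤ (w : ℝ) + 1 + ξ :=
  tAC_le_of_prod_le_general q hq hq5 C hC ξ w hwq hprod
end
end

section
/- Let q ≥ 9 and let t(q) denote the smallest size of an almost complete subset of a nondegenerate conic in PG(2,q). Then for every real ξ with 1 ≤ ξ < q^2, t(q) ≤ √(2q)·√(ln(q^2/ξ)) + ξ + 4. -/
open scoped Classical

noncomputable section

variable {F : Type} [Field F] [Fintype F]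

namespace ACAux
variable {F : Type} [Field F] [Fintype F]

variable {F : Type} [Field F] [Fintype F]

instance : Finite (PG2 F) := inferInstanceAs (Finite (Quotient _))
noncomputable instance : Fintype (PG2 F) := Fintype.ofFinite _

omit [Fintype F] in
lemma indep_of_ne {a b : PG2 F} (h : a ≠ b) :
    LinearIndependent F ![a.rep, b.rep] := by
  rw [linearIndependent_fin2]
  refine ⟨b.rep_nonzero, fun c hc => h ?_⟩
  rw [← a.mk_rep, ← b.mk_rep, Projectivization.mk_eq_mk_iff']
  exact ⟨c, hc⟩

omit [Fintype F] in
lemma combo_eq_zero {x y : Fin 3 → F} (h : LinearIndependent F ![x, y]) {c d : F}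
    (hcd : c • x + d • y = 0) : c = 0 ∧ d = 0 := by
  have := Fintype.linearIndependent_iff.mp h ![c, d]
    (by simpa [Fin.sum_univ_two] using hcd)
  exact ⟨this 0, this 1⟩

omit [Fintype F] in
lemma finrank_span_pair' {x y : Fin 3 → F} (h : LinearIndependent F ![x, y]) :
    Module.finrank F (Submodule.span F ({x, y} : Set (Fin 3 → F))) = 2 := by
  have hr : ({x, y} : Set (Fin 3 → F)) = Set.range ![x, y] := by
    simp [Matrix.range_cons, Matrix.range_empty, Set.singleton_union]
    exact Set.pair_comm x y
  rw [hr, finrank_span_eq_card h]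
  simp

omit [Fintype F] in
lemma finrank_lineW {a b : PG2 F} (h : a ≠ b) :
    Module.finrank F (Submodule.span F ({a.rep, b.rep} : Set (Fin 3 → F))) = 2 :=
  finrank_span_pair' (indep_of_ne h)

omit [Fintype F] in
lemma unit_smul_cancel {x : Fin 3 → F} (hx : x ≠ 0) {c d : Fˣ}
    (h : (c : F) • x = (d : F) • x) : c = d := by
  have h0 : ((c : F) - d) • x = 0 := by rw [sub_smul, h, sub_self]
  rcases smul_eq_zero.mp h0 with h1 | h1
  · exact Units.ext (sub_eq_zero.mp h1)
  · exact absurd h1 hx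

lemma card_PG2 : Nat.card (PG2 F) = Fintype.card F ^ 2 + Fintype.card F + 1 := by
  set q := Fintype.card F with hq
  have hq2 : 2 ≤ q := Fintype.one_lt_card
  have e : { v : Fin 3 → F // v ≠ 0 } ≃ PG2 F × Fˣ := by
    refine Equiv.ofBijective (fun v =>
      ⟨Projectivization.mk F v.1 v.2,
        ((Projectivization.exists_smul_eq_mk_rep F v.1 v.2).choose)⁻¹⟩) ⟨?_, ?_⟩
    · intro v w hvw
      have hv := (Projectivization.exists_smul_eq_mk_rep F v.1 v.2).choose_spec
      have hw := (Projectivization.exists_smul_eq_mk_rep F w.1 w.2).choose_spec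
      obtain ⟨h1, h2⟩ := Prod.mk.injEq .. ▸ hvw
      set cv := (Projectivization.exists_smul_eq_mk_rep F v.1 v.2).choose
      set cw := (Projectivization.exists_smul_eq_mk_rep F w.1 w.2).choose
      have hcc : cv = cw := inv_injective h2
      have hvw2 : cv • v.1 = cw • w.1 := by rw [hv, hw, h1]
      apply Subtype.ext
      have := congrArg (fun x => (cv⁻¹ : Fˣ) • x) hvw2
      simpa [hcc, smul_smul] using this
    · rintro ⟨p, a⟩
      have hane : (a : F) • p.rep ≠ 0 := smul_ne_zero (Units.ne_zero a) p.rep_nonzero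
      refine ⟨⟨(a : F) • p.rep, hane⟩, ?_⟩
      have hmk : Projectivization.mk F ((a : F) • p.rep) hane = p := by
        conv_rhs => rw [← p.mk_rep]
        rw [Projectivization.mk_eq_mk_iff']
        exact ⟨a, rfl⟩
      have hch := (Projectivization.exists_smul_eq_mk_rep F ((a : F) • p.rep)
        hane).choose_spec
      set c := (Projectivization.exists_smul_eq_mk_rep F ((a : F) • p.rep) hane).choose
        with hcdef
      rw [hmk] at hch
      have hrep : ((c * a : Fˣ) : F) • p.rep = ((1 : Fˣ) : F) • p.rep := by
        push_cast
        rw [mul_smul]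
        · rw [one_smul]
          exact_mod_cast hch
      have hca : c * a = 1 := unit_smul_cancel p.rep_nonzero hrep
      have hc : c⁻¹ = a := by
        rw [inv_eq_iff_mul_eq_one]; exact hca
      exact Prod.ext hmk hc
  have h1 : Nat.card { v : Fin 3 → F // v ≠ 0 } = q ^ 3 - 1 := by
    rw [Nat.card_eq_fintype_card]
    have hcc : Fintype.card { v : Fin 3 → F // v ≠ 0 } =
        Fintype.card (Fin 3 → F) - 1 := by
      classical
      rw [Fintype.card_subtype_compl, Fintype.card_subtype_eq (0 : Fin 3 → F)]
    rw [hcc, Fintype.card_fun]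
    simp [hq]
  have h2 : Nat.card { v : Fin 3 → F // v ≠ 0 } = Nat.card (PG2 F) * (q - 1) := by
    rw [Nat.card_congr e, Nat.card_prod, Nat.card_eq_fintype_card (α := Fˣ),
      Fintype.card_units]
  have e3 : ∀ n : ℕ, 2 ≤ n → (n ^ 2 + n + 1) * (n - 1) = n ^ 3 - 1 := by
    rintro n hn
    obtain ⟨m, rfl⟩ : ∃ m, n = m + 2 := ⟨n - 2, by omega⟩
    have h' : ((m + 2) ^ 2 + (m + 2) + 1) * (m + 1) + 1 = (m + 2) ^ 3 := by ring
    rw [show m + 2 - 1 = m + 1 from rfl]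
    omega
  have hkey : Nat.card (PG2 F) * (q - 1) = (q ^ 2 + q + 1) * (q - 1) := by
    rw [← h2, h1, e3 q hq2]
  exact Nat.eq_of_mul_eq_mul_right (by omega) hkey

variable {F : Type} [Field F] [Fintype F]
variable {C : Set (PG2 F)} {Q : QuadraticForm F (Fin 3 → F)}

omit [Fintype F] in
lemma collinear_of_mem {W : Submodule F (Fin 3 → F)} (hW : Module.finrank F W = 2)
    {a b c : PG2 F} (ha : a.rep ∈ W) (hb : b.rep ∈ W) (hc : c.rep ∈ W) :
    Collinear3 a b c := ⟨W, hW, ha, hb, hc⟩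

lemma line_inter_ncard_le (hA : IsArc C) {W : Submodule F (Fin 3 → F)}
    (hW : Module.finrank F W = 2) : ({p : PG2 F | p.rep ∈ W} ∩ C).ncard ≤ 2 := by
  by_contra h
  push_neg at h
  obtain ⟨a, ha, b, hb, c, hc, hab, hac, hbc⟩ := (Set.two_lt_ncard (Set.toFinite _)).mp h
  exact hA a ha.2 b hb.2 c hc.2 hab hbc hac (collinear_of_mem hW ha.1 hb.1 hc.1)

omit [Fintype F] in
lemma mem_conic_iff (hQC : C = {p : PG2 F | Q p.rep = 0}) {p : PG2 F} :
    p ∈ C ↔ Q p.rep = 0 := by rw [hQC]; exact Iff.rfl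

omit [Fintype F] in
lemma Qmk_zero_iff {v : Fin 3 → F} (hv : v ≠ 0) :
    Q ((Projectivization.mk F v hv).rep) = 0 ↔ Q v = 0 := by
  obtain ⟨c, hc⟩ := Projectivization.exists_smul_eq_mk_rep F v hv
  rw [← hc, Units.smul_def, QuadraticMap.map_smul, smul_eq_mul]
  constructor
  · intro h
    rcases mul_eq_zero.mp h with h1 | h1
    · exact absurd h1 (mul_ne_zero (Units.ne_zero c) (Units.ne_zero c))
    · exact h1
  · intro h; rw [h, mul_zero]

omit [Fintype F] in
lemma rep_mk_mem {v : Fin 3 → F} (hv : v ≠ 0) {W : Submodule F (Fin 3 → F)}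
    (hvW : v ∈ W) : (Projectivization.mk F v hv).rep ∈ W := by
  obtain ⟨c, hc⟩ := Projectivization.exists_smul_eq_mk_rep F v hv
  rw [← hc, Units.smul_def]
  exact Submodule.smul_mem _ _ hvW

omit [Fintype F] in
lemma exists_second_point (hQC : C = {p : PG2 F | Q p.rep = 0})
    {P b : PG2 F} (hP : P ∉ C) (hb : b ∈ C)
    (hpol : QuadraticMap.polar Q b.rep P.rep ≠ 0) :
    ∃ a : PG2 F, a ∈ C ∧ a ≠ b ∧ a ≠ P ∧
      a.rep ∈ Submodule.span F ({b.rep, P.rep} : Set (Fin 3 → F)) := by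
  have hbP : b ≠ P := fun h => hP (h ▸ hb)
  have hi := indep_of_ne hbP
  have hQP : Q P.rep ≠ 0 := by
    intro h; exact hP ((mem_conic_iff hQC).mpr h)
  have hQb : Q b.rep = 0 := (mem_conic_iff hQC).mp hb
  set t : F := -(Q P.rep)⁻¹ * QuadraticMap.polar Q b.rep P.rep with ht
  have ht0 : t ≠ 0 := by
    apply mul_ne_zero _ hpol
    simpa using hQP
  set v := b.rep + t • P.rep with hvdef
  have hv0 : v ≠ 0 := by
    intro h
    have h' : (1 : F) • b.rep + t • P.rep = 0 := by simpa [hvdef] using h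
    exact one_ne_zero (combo_eq_zero hi h').1
  have hQv : Q v = 0 := by
    rw [hvdef, QuadraticMap.map_add (⇑Q) b.rep (t • P.rep), QuadraticMap.map_smul,
      QuadraticMap.polar_smul_right, hQb, smul_eq_mul, smul_eq_mul, ht]
    field_simp
    ring
  refine ⟨Projectivization.mk F v hv0, ?_, ?_, ?_, ?_⟩
  · exact (mem_conic_iff hQC).mpr ((Qmk_zero_iff hv0).mpr hQv)
  · intro h
    rw [← b.mk_rep, Projectivization.mk_eq_mk_iff'] at h
    obtain ⟨c, hc⟩ := h
    have h' : (c - 1) • b.rep + (-t) • P.rep = 0 := by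
      rw [sub_smul, one_smul, neg_smul, hc, hvdef]; abel
    exact ht0 (neg_eq_zero.mp (combo_eq_zero hi h').2)
  · intro h
    rw [← P.mk_rep, Projectivization.mk_eq_mk_iff'] at h
    obtain ⟨c, hc⟩ := h
    have h' : (1 : F) • b.rep + (t - c) • P.rep = 0 := by
      rw [sub_smul, one_smul, hc, hvdef]; abel
    exact one_ne_zero (combo_eq_zero hi h').1
  · refine rep_mk_mem hv0 ?_
    refine Submodule.add_mem _ ?_ (Submodule.smul_mem _ _ ?_)
    · exact Submodule.subset_span (Set.mem_insert _ _)
    · exact Submodule.subset_span (Set.mem_insert_of_mem _ rfl)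

omit [Fintype F] in
lemma exists_polar_ne_zero (hA : IsArc C) (hQC : C = {p : PG2 F | Q p.rep = 0})
    (hcard : 2 ≤ C.ncard) {a : PG2 F} (ha : a ∈ C) :
    ∃ y, QuadraticMap.polar Q a.rep y ≠ 0 := by
  by_contra hcon
  push_neg at hcon
  obtain ⟨b, hbC, hba⟩ := Set.exists_ne_of_one_lt_ncard (s := C) (by omega) a
  have hab : a ≠ b := hba.symm
  have hi := indep_of_ne hba
  set v := b.rep + a.rep with hvdef
  have hv0 : v ≠ 0 := by
    intro h
    have h' : (1 : F) • b.rep + (1 : F) • a.rep = 0 := by simpa [hvdef] using h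
    exact one_ne_zero (combo_eq_zero hi h').1
  have hQv : Q v = 0 := by
    rw [hvdef, QuadraticMap.map_add (⇑Q) b.rep a.rep, (mem_conic_iff hQC).mp hbC,
      (mem_conic_iff hQC).mp ha, QuadraticMap.polar_comm, hcon b.rep]
    simp
  set x := Projectivization.mk F v hv0 with hxdef
  have hxC : x ∈ C := (mem_conic_iff hQC).mpr ((Qmk_zero_iff hv0).mpr hQv)
  have hax : a ≠ x := by
    intro h
    have h2 : x = Projectivization.mk F a.rep a.rep_nonzero := by
      rw [← h, a.mk_rep]
    rw [hxdef, Projectivization.mk_eq_mk_iff'] at h2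
    obtain ⟨c, hc⟩ := h2
    have h' : (1 : F) • b.rep + (1 - c) • a.rep = 0 := by
      rw [sub_smul, one_smul, one_smul, hc, hvdef]; abel
    exact one_ne_zero (combo_eq_zero hi h').1
  have hbx : b ≠ x := by
    intro h
    have h2 : x = Projectivization.mk F b.rep b.rep_nonzero := by
      rw [← h, b.mk_rep]
    rw [hxdef, Projectivization.mk_eq_mk_iff'] at h2
    obtain ⟨c, hc⟩ := h2
    have h' : (1 - c) • b.rep + (1 : F) • a.rep = 0 := by
      rw [sub_smul, one_smul, one_smul, hc, hvdef]; abel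
    exact one_ne_zero (combo_eq_zero hi h').2
  refine hA a ha b hbC x hxC hab hbx hax ?_
  refine collinear_of_mem (finrank_lineW hba) ?_ ?_ ?_
  · exact Submodule.subset_span (Set.mem_insert_of_mem _ rfl)
  · exact Submodule.subset_span (Set.mem_insert _ _)
  · exact rep_mk_mem hv0 (Submodule.add_mem _
      (Submodule.subset_span (Set.mem_insert _ _))
      (Submodule.subset_span (Set.mem_insert_of_mem _ rfl)))

omit [Fintype F] in
lemma finrank_ker_eq_two {φ : (Fin 3 → F) →ₗ[F] F} (hφ : φ ≠ 0) :
    Module.finrank F (LinearMap.ker φ) = 2 := by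
  have hr : Module.finrank F (LinearMap.range φ) = 1 := by
    have h1 : LinearMap.range φ ≠ ⊥ := by rwa [Ne, LinearMap.range_eq_bot]
    have h2 : Module.finrank F (LinearMap.range φ) ≤ 1 := by
      simpa using (Submodule.finrank_le (LinearMap.range φ))
    have h3 : Module.finrank F (LinearMap.range φ) ≠ 0 := by
      intro h0
      exact h1 (Submodule.finrank_eq_zero.mp h0)
    omega
  have hsum := LinearMap.finrank_range_add_finrank_ker φ
  rw [hr, Module.finrank_fin_fun] at hsum
  omega

lemma Mset_subset (P : PG2 F) (hP : P ∈ Mset C) : P ∉ C := by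
  unfold Mset at hP
  split_ifs at hP with h
  · exact hP.1.2
  · exact hP.2

/-- Key geometric fact: for a point of `Mset C`, the polar functional is nonzero. -/
lemma polar_P_ne_zero (hA : IsArc C) (hQC : C = {p : PG2 F | Q p.rep = 0})
    (hcard : 2 ≤ C.ncard) {P : PG2 F} (hP : P ∈ Mset C) :
    ∃ y, QuadraticMap.polar Q y P.rep ≠ 0 := by
  by_contra hcon
  push_neg at hcon
  have hPC : P ∉ C := Mset_subset P hP
  have hQP : Q P.rep ≠ 0 := fun h => hPC ((mem_conic_iff hQC).mpr h)
  by_cases heven : Even (Fintype.card F)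
  · -- characteristic two: P would be a nucleus
    have hnuc : ¬ IsNucleus C P := by
      unfold Mset at hP
      rw [if_pos heven] at hP
      exact hP.2
    apply hnuc
    rintro L ⟨⟨W, hW2, rfl⟩, hL1⟩
    obtain ⟨a, haL⟩ := Set.ncard_eq_one.mp hL1
    have haLC : a ∈ {p : PG2 F | p.rep ∈ W} ∩ C := haL ▸ rfl
    have haC : a ∈ C := haLC.2
    have haW : a.rep ∈ W := haLC.1
    have hQa : Q a.rep = 0 := (mem_conic_iff hQC).mp haC
    obtain ⟨u, huW, hu⟩ : ∃ u ∈ W, u ∉ Submodule.span F ({a.rep} : Set (Fin 3 → F)) := by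
      by_contra h'
      push_neg at h'
      have hle : W ≤ Submodule.span F {a.rep} := h'
      have := Submodule.finrank_mono hle
      rw [hW2, finrank_span_singleton a.rep_nonzero] at this
      omega
    have hu0 : u ≠ 0 := fun h => hu (h ▸ Submodule.zero_mem _)
    have hiau : LinearIndependent F ![u, a.rep] := by
      rw [linearIndependent_fin2]
      refine ⟨a.rep_nonzero, fun c hc => hu ?_⟩
      exact Submodule.mem_span_singleton.mpr ⟨c, hc⟩
    -- no second intersection point: forces `Q u ≠ 0`
    have hsingle : ∀ (w : Fin 3 → F) (hw : w ≠ 0), w ∈ W → Q w = 0 →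
        Projectivization.mk F w hw = a := by
      intro w hw hwW hQw
      have : Projectivization.mk F w hw ∈ {p : PG2 F | p.rep ∈ W} ∩ C :=
        ⟨rep_mk_mem hw hwW, (mem_conic_iff hQC).mpr ((Qmk_zero_iff hw).mpr hQw)⟩
      rw [haL] at this
      exact this
    have hQu : Q u ≠ 0 := by
      intro hQu
      have := hsingle u hu0 huW hQu
      rw [← a.mk_rep, Projectivization.mk_eq_mk_iff'] at this
      obtain ⟨c, hc⟩ := this
      exact hu (Submodule.mem_span_singleton.mpr ⟨c, hc⟩)
    have hpau : QuadraticMap.polar Q a.rep u = 0 := by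
      by_contra hpau
      set s : F := -(Q u)⁻¹ * QuadraticMap.polar Q a.rep u with hs
      have hs0 : s ≠ 0 := by
        apply mul_ne_zero _ hpau
        simpa using hQu
      set w := a.rep + s • u with hwdef
      have hw0 : w ≠ 0 := by
        intro h
        have h' : s • u + (1 : F) • a.rep = 0 := by
          rw [one_smul]; rw [hwdef] at h; rw [← h]; abel
        exact hs0 (combo_eq_zero hiau h').1
      have hQw : Q w = 0 := by
        rw [hwdef, QuadraticMap.map_add (⇑Q) a.rep (s • u), QuadraticMap.map_smul,
          QuadraticMap.polar_smul_right, hQa, smul_eq_mul, smul_eq_mul, hs]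
        field_simp
        ring
      have := hsingle w hw0 (Submodule.add_mem _ haW (Submodule.smul_mem _ _ huW)) hQw
      rw [← a.mk_rep, Projectivization.mk_eq_mk_iff'] at this
      obtain ⟨c, hc⟩ := this
      have h' : s • u + (1 - c) • a.rep = 0 := by
        rw [sub_smul, one_smul, hc, hwdef]; abel
      exact hs0 (combo_eq_zero hiau h').1
    -- the tangent line is the kernel of the polar functional at a
    set ψ : (Fin 3 → F) →ₗ[F] F := QuadraticMap.polarBilin Q a.rep with hψ
    have hψa : ψ a.rep = 0 := by
      rw [hψ, QuadraticMap.polarBilin_apply_apply, QuadraticMap.polar_self, hQa, smul_zero]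
    have hψu : ψ u = 0 := by
      rw [hψ, QuadraticMap.polarBilin_apply_apply]; exact hpau
    have hψ0 : ψ ≠ 0 := by
      obtain ⟨y, hy⟩ := exists_polar_ne_zero hA hQC hcard haC
      intro h
      apply hy
      have := congrArg (fun g => g y) (congrArg DFunLike.coe h)
      simpa [hψ, QuadraticMap.polarBilin_apply_apply] using this
    have hWker : W ≤ LinearMap.ker ψ := by
      have hspan : Submodule.span F ({u, a.rep} : Set (Fin 3 → F)) = W := by
        apply Submodule.eq_of_le_of_finrank_le
        · rw [Submodule.span_le]
          rintro z (rfl | rfl)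
          · exact huW
          · exact haW
        · rw [hW2, finrank_span_pair' hiau]
      intro w hw
      rw [← hspan] at hw
      obtain ⟨c, d, hcd⟩ := Submodule.mem_span_pair.mp hw
      rw [LinearMap.mem_ker, ← hcd]
      rw [map_add, map_smul, map_smul, hψa, hψu]
      simp
    have hWeq : W = LinearMap.ker ψ := by
      apply Submodule.eq_of_le_of_finrank_le hWker
      rw [hW2, finrank_ker_eq_two hψ0]
    show P.rep ∈ W
    rw [hWeq, LinearMap.mem_ker, hψ, QuadraticMap.polarBilin_apply_apply]
    exact hcon a.rep
  · -- odd characteristic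
    have hchar : ringChar F ≠ 2 := by
      intro h
      exact heven (Nat.even_iff.mpr (FiniteField.even_card_iff_char_two.mp h))
    have h2 : (2 : F) ≠ 0 := Ring.two_ne_zero hchar
    have hself := hcon P.rep
    rw [QuadraticMap.polar_self] at hself
    apply hQP
    have h2Q : (2 : F) * Q P.rep = 0 := by
      rw [two_mul]
      simpa [two_smul] using hself
    exact (mul_eq_zero.mp h2Q).resolve_left h2

/-- At most two points of the conic have vanishing polar with P. -/
lemma bad_ncard_le (hA : IsArc C) (hQC : C = {p : PG2 F | Q p.rep = 0})
    (hcard : 2 ≤ C.ncard) {P : PG2 F} (hP : P ∈ Mset C) :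
    ({b : PG2 F | b ∈ C ∧ QuadraticMap.polar Q b.rep P.rep = 0}).ncard ≤ 2 := by
  obtain ⟨y, hy⟩ := polar_P_ne_zero hA hQC hcard hP
  set φ : (Fin 3 → F) →ₗ[F] F := (QuadraticMap.polarBilin Q).flip P.rep with hφ
  have hφy : ∀ z, φ z = QuadraticMap.polar Q z P.rep := by
    intro z
    rw [hφ, LinearMap.flip_apply, QuadraticMap.polarBilin_apply_apply]
  have hφ0 : φ ≠ 0 := by
    intro h
    apply hy
    have := congrArg (fun g => g y) (congrArg DFunLike.coe h)
    simpa [hφy y] using this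
  have hsub : {b : PG2 F | b ∈ C ∧ QuadraticMap.polar Q b.rep P.rep = 0} ⊆
      {p : PG2 F | p.rep ∈ LinearMap.ker φ} ∩ C := by
    rintro b ⟨hbC, hbpol⟩
    exact ⟨by rw [Set.mem_setOf_eq, LinearMap.mem_ker, hφy]; exact hbpol, hbC⟩
  calc ({b : PG2 F | b ∈ C ∧ QuadraticMap.polar Q b.rep P.rep = 0}).ncard
      ≤ ({p : PG2 F | p.rep ∈ LinearMap.ker φ} ∩ C).ncard :=
        Set.ncard_le_ncard hsub (Set.toFinite _)
    _ ≤ 2 := line_inter_ncard_le hA (finrank_ker_eq_two hφ0)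

/-! ### Covering combinatorics -/

/-- Points of `Mset C` not yet covered by `S`. -/
def Unc (C S : Set (PG2 F)) : Set (PG2 F) := {P ∈ Mset C | ¬ Covered S P}

omit [Fintype F] in
lemma covered_mono {S T : Set (PG2 F)} (h : S ⊆ T) {P : PG2 F} :
    Covered S P → Covered T P := by
  rintro ⟨a, haS, b, hbS, hab, hcol⟩
  exact ⟨a, h haS, b, h hbS, hab, hcol⟩

lemma Unc_mono {S T : Set (PG2 F)} (h : S ⊆ T) : Unc C T ⊆ Unc C S := by
  rintro P ⟨hPM, hPc⟩
  exact ⟨hPM, fun hc => hPc (covered_mono h hc)⟩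

/-- Candidate new points which would cover `P`. -/
def GoodSet (C S : Set (PG2 F)) (P : PG2 F) : Set (PG2 F) :=
  {a : PG2 F | a ∈ C ∧ a ∉ S ∧ ∃ b ∈ S, b ≠ a ∧ Collinear3 b a P}

omit [Fintype F] in
lemma covered_of_good {S T : Set (PG2 F)} {P a : PG2 F} (ha : a ∈ GoodSet C S P)
    (hST : S ⊆ T) (haT : a ∈ T) : Covered T P := by
  obtain ⟨haC, haS, b, hbS, hba, hcol⟩ := ha
  exact ⟨b, hST hbS, a, haT, hba, hcol⟩

omit [Fintype F] in
lemma goodset_subset_diff : GoodSet C S P ⊆ C \ S := fun a ha => ⟨ha.1, ha.2.1⟩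

/-- Lower bound on the number of good points for an uncovered point. -/
lemma good_lower (hA : IsArc C) (hQC : C = {p : PG2 F | Q p.rep = 0})
    (hq2 : 2 ≤ C.ncard) {S : Set (PG2 F)} (hS : S ⊆ C) {P : PG2 F}
    (hP : P ∈ Mset C) (hunc : ¬ Covered S P) :
    S.ncard ≤ (GoodSet C S P).ncard + 2 := by
  classical
  have hPC : P ∉ C := Mset_subset P hP
  set Bad := {b : PG2 F | b ∈ C ∧ QuadraticMap.polar Q b.rep P.rep = 0} with hBad
  have hchoice : ∀ b, b ∈ S \ Bad → ∃ a, a ∈ GoodSet C S P ∧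
      a.rep ∈ Submodule.span F ({b.rep, P.rep} : Set (Fin 3 → F)) ∧ a ≠ P := by
    intro b hb
    have hbC : b ∈ C := hS hb.1
    have hbpol : QuadraticMap.polar Q b.rep P.rep ≠ 0 := fun h => hb.2 ⟨hbC, h⟩
    obtain ⟨a, haC, hab, haP, haspan⟩ := exists_second_point hQC hPC hbC hbpol
    have hbP : b ≠ P := fun h => hPC (h ▸ hbC)
    have hbmem : b.rep ∈ Submodule.span F ({b.rep, P.rep} : Set (Fin 3 → F)) :=
      Submodule.subset_span (Set.mem_insert _ _)
    have hPmem : P.rep ∈ Submodule.span F ({b.rep, P.rep} : Set (Fin 3 → F)) :=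
      Submodule.subset_span (Set.mem_insert_of_mem _ rfl)
    have hcol : Collinear3 b a P :=
      collinear_of_mem (finrank_lineW hbP) hbmem haspan hPmem
    have haS : a ∉ S := by
      intro haS
      exact hunc ⟨a, haS, b, hb.1, hab,
        collinear_of_mem (finrank_lineW hbP) haspan hbmem hPmem⟩
    exact ⟨a, ⟨haC, haS, b, hb.1, hab.symm, hcol⟩, haspan, haP⟩
  choose! f hf using hchoice
  have hmaps : ∀ b ∈ S \ Bad, f b ∈ GoodSet C S P := fun b hb => (hf b hb).1
  have hinj : Set.InjOn f (S \ Bad) := by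
    intro b1 hb1 b2 hb2 heq
    by_contra hne
    obtain ⟨hg1, hsp1, hP1⟩ := hf b1 hb1
    obtain ⟨hg2, hsp2, _⟩ := hf b2 hb2
    rw [← heq] at hsp2
    have hiaP := indep_of_ne hP1
    have hW0 : ∀ b' : PG2 F, (f b1).rep ∈ Submodule.span F ({b'.rep, P.rep} : Set (Fin 3 → F)) →
        b' ≠ P →
        Submodule.span F ({(f b1).rep, P.rep} : Set (Fin 3 → F)) =
        Submodule.span F ({b'.rep, P.rep} : Set (Fin 3 → F)) := by
      intro b' hsp hb'P
      apply Submodule.eq_of_le_of_finrank_le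
      · rw [Submodule.span_le]
        rintro z (rfl | rfl)
        · exact hsp
        · exact Submodule.subset_span (Set.mem_insert_of_mem _ rfl)
      · rw [finrank_lineW hP1, finrank_lineW hb'P]
    have hb1P : b1 ≠ P := fun h => hPC (h ▸ hS hb1.1)
    have hb2P : b2 ≠ P := fun h => hPC (h ▸ hS hb2.1)
    have hWW : Submodule.span F ({b1.rep, P.rep} : Set (Fin 3 → F)) =
        Submodule.span F ({b2.rep, P.rep} : Set (Fin 3 → F)) := by
      rw [← hW0 b1 hsp1 hb1P, hW0 b2 hsp2 hb2P]
    have hb1a : b1 ≠ f b1 := by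
      intro h; exact hg1.2.1 (by rw [← h]; exact hb1.1)
    have hb2a : b2 ≠ f b1 := by
      intro h; exact hg1.2.1 (by rw [← h]; exact hb2.1)
    refine hA b1 (hS hb1.1) b2 (hS hb2.1) (f b1) hg1.1 hne hb2a hb1a ?_
    refine collinear_of_mem (F := F) (W := Submodule.span F ({b1.rep, P.rep} : Set (Fin 3 → F)))
      (finrank_lineW hb1P) ?_ ?_ ?_
    · exact Submodule.subset_span (Set.mem_insert _ _)
    · rw [hWW]; exact Submodule.subset_span (Set.mem_insert _ _)
    · exact hsp1
  have h1 : (S \ Bad).ncard ≤ (GoodSet C S P).ncard :=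
    Set.ncard_le_ncard_of_injOn f hmaps hinj (Set.toFinite _)
  have h2 : (S ∩ Bad).ncard ≤ 2 :=
    le_trans (Set.ncard_le_ncard Set.inter_subset_right (Set.toFinite _))
      (bad_ncard_le hA hQC hq2 hP)
  have h3 : (S \ (S ∩ Bad)).ncard + (S ∩ Bad).ncard = S.ncard :=
    Set.ncard_diff_add_ncard_of_subset Set.inter_subset_left (Set.toFinite _)
  rw [Set.diff_self_inter] at h3
  omega

/-- The greedy step: some new point covers an average share of uncovered points. -/
lemma greedy_step (hA : IsArc C) (hQC : C = {p : PG2 F | Q p.rep = 0})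
    (hcard : C.ncard = Fintype.card F + 1)
    {S : Set (PG2 F)} (hS : S ⊆ C) (hlt : S.ncard + 1 ≤ Fintype.card F) :
    ∃ a ∈ C \ S, (((C \ S).ncard : ℝ)) * ((Unc C (insert a S)).ncard : ℝ) ≤
      (((C \ S).ncard : ℝ) - ((S.ncard : ℝ) - 2)) * ((Unc C S).ncard : ℝ) := by
  classical
  have hq2 : 2 ≤ C.ncard := by omega
  have hCfin : C.Finite := Set.toFinite _
  have hmcard : (C \ S).ncard + S.ncard = C.ncard :=
    Set.ncard_diff_add_ncard_of_subset hS hCfin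
  have hmpos : 0 < (C \ S).ncard := by omega
  have hAne : (C \ S).Nonempty := (Set.ncard_pos (Set.toFinite _)).mp hmpos
  set U := Unc C S with hU
  rcases Set.eq_empty_or_nonempty U with hUe | hUne
  · obtain ⟨a, ha⟩ := hAne
    refine ⟨a, ha, ?_⟩
    have : Unc C (insert a S) ⊆ U := Unc_mono (Set.subset_insert _ _)
    rw [hUe] at this
    have h0 : (Unc C (insert a S)).ncard = 0 := by
      rw [Set.ncard_eq_zero (Set.toFinite _)]
      exact Set.subset_empty_iff.mp this
    rw [h0, hUe]
    simp
  · -- averaging over A = C \ S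
    set A : Finset (PG2 F) := (C \ S).toFinset with hAdef
    set UF : Finset (PG2 F) := U.toFinset with hUFdef
    set f : PG2 F → ℕ := fun a => (UF.filter (fun P => a ∈ GoodSet C S P)).card with hfdef
    have hAcard : A.card = (C \ S).ncard := by
      rw [hAdef, Set.ncard_eq_toFinset_card']
    have hUFcard : UF.card = U.ncard := by
      rw [hUFdef, Set.ncard_eq_toFinset_card']
    have hgood : ∀ P ∈ UF, S.ncard ≤ (A.filter (fun a => a ∈ GoodSet C S P)).card + 2 := by
      intro P hPU
      rw [hUFdef, Set.mem_toFinset] at hPU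
      have := good_lower hA hQC hq2 hS hPU.1 hPU.2
      have heq : (A.filter (fun a => a ∈ GoodSet C S P)).card = (GoodSet C S P).ncard := by
        rw [Set.ncard_eq_toFinset_card']
        congr 1
        ext a
        simp only [Finset.mem_filter, Set.mem_toFinset, hAdef]
        exact ⟨fun h => h.2, fun h => ⟨goodset_subset_diff h, h⟩⟩
      omega
    have hswap : ∑ a ∈ A, f a = ∑ P ∈ UF, (A.filter (fun a => a ∈ GoodSet C S P)).card := by
      simp only [hfdef, Finset.card_filter]
      rw [Finset.sum_comm]
    have hlow : UF.card * (S.ncard - 2) ≤ ∑ a ∈ A, f a := by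
      rw [hswap]
      calc UF.card * (S.ncard - 2) = ∑ _P ∈ UF, (S.ncard - 2) := by
            rw [Finset.sum_const, smul_eq_mul]
        _ ≤ ∑ P ∈ UF, (A.filter (fun a => a ∈ GoodSet C S P)).card := by
            refine Finset.sum_le_sum fun P hP => ?_
            have := hgood P hP
            omega
    have hAne' : A.Nonempty := by
      rwa [hAdef, Set.toFinset_nonempty]
    obtain ⟨a0, ha0A, ha0max⟩ := Finset.exists_max_image A f hAne'
    have hsumle : ∑ a ∈ A, f a ≤ A.card * f a0 := by
      calc ∑ a ∈ A, f a ≤ ∑ _a ∈ A, f a0 := Finset.sum_le_sum fun b hb => ha0max b hb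
        _ = A.card * f a0 := by rw [Finset.sum_const, smul_eq_mul]
    have hkey : UF.card * (S.ncard - 2) ≤ A.card * f a0 := le_trans hlow hsumle
    have ha0 : a0 ∈ C \ S := by rwa [hAdef, Set.mem_toFinset] at ha0A
    refine ⟨a0, ha0, ?_⟩
    -- the set of points covered by a0
    set D : Set (PG2 F) := {P ∈ U | a0 ∈ GoodSet C S P} with hD
    have hDcard : D.ncard = f a0 := by
      rw [hfdef, Set.ncard_eq_toFinset_card']
      congr 1
      ext P
      simp only [Finset.mem_filter, Set.mem_toFinset, hUFdef, hD]
      rfl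
    have hDU : D ⊆ U := Set.sep_subset _ _
    have hsub : Unc C (insert a0 S) ⊆ U \ D := by
      intro P hP
      have hPU : P ∈ U := Unc_mono (Set.subset_insert _ _) hP
      refine ⟨hPU, fun hPD => ?_⟩
      exact hP.2 (covered_of_good hPD.2 (Set.subset_insert _ _) (Set.mem_insert _ _))
    have hUD : (U \ D).ncard = U.ncard - D.ncard :=
      Set.ncard_diff_add_ncard_of_subset hDU (Set.toFinite _) ▸ by omega
    have hcount : (Unc C (insert a0 S)).ncard + f a0 ≤ U.ncard := by
      have h1 : (Unc C (insert a0 S)).ncard ≤ (U \ D).ncard :=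
        Set.ncard_le_ncard hsub (Set.toFinite _)
      have h2 : D.ncard ≤ U.ncard := Set.ncard_le_ncard hDU (Set.toFinite _)
      omega
    -- now pass to the reals
    have hc1 : ((Unc C (insert a0 S)).ncard : ℝ) ≤ (U.ncard : ℝ) - (f a0 : ℝ) := by
      have hcast : ((Unc C (insert a0 S)).ncard : ℝ) + (f a0 : ℝ) ≤ (U.ncard : ℝ) := by
        exact_mod_cast hcount
      linarith
    have hc2 : ((S.ncard : ℝ) - 2) * (U.ncard : ℝ) ≤ ((C \ S).ncard : ℝ) * (f a0 : ℝ) := by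
      have hcast : ((S.ncard : ℝ) - 2) ≤ ((S.ncard - 2 : ℕ) : ℝ) := by
        rcases le_or_gt 2 S.ncard with h | h
        · rw [Nat.cast_sub h]; push_cast; linarith
        · have : ((S.ncard : ℝ)) < 2 := by exact_mod_cast h
          have h0 : (0 : ℝ) ≤ ((S.ncard - 2 : ℕ) : ℝ) := Nat.cast_nonneg _
          linarith
      calc ((S.ncard : ℝ) - 2) * (U.ncard : ℝ)
          ≤ ((S.ncard - 2 : ℕ) : ℝ) * (U.ncard : ℝ) :=
            mul_le_mul_of_nonneg_right hcast (Nat.cast_nonneg _)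
        _ ≤ ((C \ S).ncard : ℝ) * (f a0 : ℝ) := by
            rw [← hAcard, ← hUFcard]
            have hkey' : ((S.ncard - 2) * UF.card : ℕ) ≤ A.card * f a0 := by
              rw [mul_comm]; exact hkey
            exact_mod_cast hkey'
    have hm0 : (0 : ℝ) ≤ ((C \ S).ncard : ℝ) := Nat.cast_nonneg _
    have := mul_le_mul_of_nonneg_left hc1 hm0
    nlinarith [hc2]

/-! ### The greedy chain and the analytic estimates -/

/-- The contraction factor at step `i`. -/
noncomputable def fct (q i : ℕ) : ℝ := max 0 (1 - (i : ℝ) / ((q : ℝ) - 1 - (i : ℝ)))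

lemma fct_nonneg (q i : ℕ) : 0 ≤ fct q i := le_max_left _ _

lemma Mset_sub_diff : Mset C ⊆ Set.univ \ C := by
  unfold Mset
  split_ifs
  · exact Set.diff_subset.trans subset_rfl
  · exact subset_rfl

lemma chain (hA : IsArc C) (hQC : C = {p : PG2 F | Q p.rep = 0})
    (hcard : C.ncard = Fintype.card F + 1) (hq9 : 9 ≤ Fintype.card F) :
    ∀ k : ℕ, 2 + k ≤ Fintype.card F → ∃ S : Set (PG2 F), S ⊆ C ∧ S.ncard = 2 + k ∧
      ((Unc C S).ncard : ℝ) ≤ (Fintype.card F : ℝ) ^ 2 *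
        ∏ i ∈ Finset.range k, fct (Fintype.card F) i := by
  intro k
  induction k with
  | zero =>
    intro _
    have h2 : 2 ≤ C.toFinset.card := by
      rw [← Set.ncard_eq_toFinset_card']
      omega
    obtain ⟨T, hTsub, hTcard⟩ := Finset.exists_subset_card_eq h2
    refine ⟨(T : Set (PG2 F)), ?_, ?_, ?_⟩
    · intro x hx
      exact Set.mem_toFinset.mp (hTsub hx)
    · rw [Set.ncard_coe_finset, hTcard]
    · simp only [Finset.range_zero, Finset.prod_empty, mul_one]
      have hdiff : (Set.univ \ C).ncard = Nat.card (PG2 F) - C.ncard := by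
        have h := Set.ncard_diff_add_ncard_of_subset (Set.subset_univ C) (Set.toFinite _)
        rw [Set.ncard_univ] at h
        omega
      have hsub : Unc C (T : Set (PG2 F)) ⊆ Set.univ \ C :=
        fun P hP => Mset_sub_diff hP.1
      have hle : (Unc C (T : Set (PG2 F))).ncard ≤ Fintype.card F ^ 2 := by
        have := Set.ncard_le_ncard hsub (Set.toFinite _)
        rw [hdiff, card_PG2, hcard] at this
        omega
      calc ((Unc C (T : Set (PG2 F))).ncard : ℝ) ≤ ((Fintype.card F ^ 2 : ℕ) : ℝ) := by
            exact_mod_cast hle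
        _ = (Fintype.card F : ℝ) ^ 2 := by push_cast; ring
  | succ k ih =>
    intro hk1
    obtain ⟨S, hSsub, hScard, hbound⟩ := ih (by omega)
    obtain ⟨a, ha, hineq⟩ := greedy_step hA hQC hcard hSsub (by omega)
    refine ⟨insert a S, Set.insert_subset ha.1 hSsub, ?_, ?_⟩
    · rw [Set.ncard_insert_of_notMem ha.2 (Set.toFinite _), hScard]
      omega
    · set q := Fintype.card F with hqdef
      have hmn : (C \ S).ncard + S.ncard = C.ncard :=
        Set.ncard_diff_add_ncard_of_subset hSsub (Set.toFinite _)
      have hm : (C \ S).ncard = q + 1 - (2 + k) := by omega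
      have hm2 : 2 ≤ (C \ S).ncard := by omega
      have hmR : ((C \ S).ncard : ℝ) = (q : ℝ) - 1 - (k : ℝ) := by
        rw [hm, Nat.cast_sub (by omega)]
        push_cast
        ring
      rw [hScard, hmR] at hineq
      have hcast : ((2 + k : ℕ) : ℝ) - 2 = (k : ℝ) := by push_cast; ring
      rw [hcast] at hineq
      have hU0 : (0:ℝ) ≤ ((Unc C S).ncard : ℝ) := Nat.cast_nonneg _
      have hU'0 : (0:ℝ) ≤ ((Unc C (insert a S)).ncard : ℝ) := Nat.cast_nonneg _
      have hmpos : (0:ℝ) < (q:ℝ) - 1 - (k : ℝ) := by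
        have h2' : (2:ℝ) ≤ ((C \ S).ncard : ℝ) := by exact_mod_cast hm2
        rw [hmR] at h2'
        linarith
      have hstep : ((Unc C (insert a S)).ncard : ℝ) ≤
          fct q k * ((Unc C S).ncard : ℝ) := by
        rcases le_or_gt ((q:ℝ) - 1 - (k:ℝ) - (k:ℝ)) 0 with hneg | hpos
        · have hr : ((q:ℝ) - 1 - (k:ℝ) - (k:ℝ)) * ((Unc C S).ncard : ℝ) ≤ 0 :=
            mul_nonpos_of_nonpos_of_nonneg hneg hU0
          have hl : ((q:ℝ) - 1 - (k:ℝ)) * ((Unc C (insert a S)).ncard : ℝ) ≤ 0 :=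
            le_trans hineq hr
          have hU' : ((Unc C (insert a S)).ncard : ℝ) = 0 := by
            nlinarith
          rw [hU']
          exact mul_nonneg (fct_nonneg q k) hU0
        · have h1 : ((Unc C (insert a S)).ncard : ℝ) ≤
              (((q:ℝ) - 1 - (k:ℝ)) - (k:ℝ)) / ((q:ℝ) - 1 - (k:ℝ)) * ((Unc C S).ncard : ℝ) := by
            rw [div_mul_eq_mul_div, le_div_iff₀ hmpos, mul_comm]
            exact hineq
          refine le_trans h1 ?_
          have h2' : (((q:ℝ) - 1 - (k:ℝ)) - (k:ℝ)) / ((q:ℝ) - 1 - (k:ℝ)) ≤ fct q k := by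
            have heq : (((q:ℝ) - 1 - (k:ℝ)) - (k:ℝ)) / ((q:ℝ) - 1 - (k:ℝ)) =
                1 - (k:ℝ) / ((q:ℝ) - 1 - (k:ℝ)) := by
              field_simp
            rw [heq]
            exact le_max_right _ _
          exact mul_le_mul_of_nonneg_right h2' hU0
      calc ((Unc C (insert a S)).ncard : ℝ)
          ≤ fct q k * ((Unc C S).ncard : ℝ) := hstep
        _ ≤ fct q k * ((q : ℝ) ^ 2 * ∏ i ∈ Finset.range k, fct q i) :=
            mul_le_mul_of_nonneg_left hbound (fct_nonneg q k)
        _ = (q : ℝ) ^ 2 * ∏ i ∈ Finset.range (k + 1), fct q i := by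
            rw [Finset.prod_range_succ]
            ring

omit [Fintype F] in
lemma prod_bound {q k : ℕ} (hk : 2 + k ≤ q) :
    ∏ i ∈ Finset.range k, fct q i ≤
      Real.exp (-(∑ i ∈ Finset.range k, (i:ℝ)) / (q : ℝ)) := by
  have hq0 : (0:ℝ) < (q : ℝ) := by
    have : 2 ≤ q := by omega
    exact_mod_cast by omega
  calc ∏ i ∈ Finset.range k, fct q i
      ≤ ∏ i ∈ Finset.range k, Real.exp (-((i:ℝ) / (q:ℝ))) := by
        refine Finset.prod_le_prod (fun i _ => fct_nonneg q i) (fun i hi => ?_)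
        have hik : i < k := Finset.mem_range.mp hi
        have hden : (0:ℝ) < (q:ℝ) - 1 - (i:ℝ) := by
          have : (i:ℝ) + 3 ≤ (q:ℝ) := by exact_mod_cast (by omega : i + 3 ≤ q)
          linarith
        have h1 : 1 - (i:ℝ)/((q:ℝ) - 1 - (i:ℝ)) ≤
            Real.exp (-((i:ℝ)/((q:ℝ) - 1 - (i:ℝ)))) := by
          have := Real.add_one_le_exp (-((i:ℝ)/((q:ℝ) - 1 - (i:ℝ))))
          linarith
        have h2 : Real.exp (-((i:ℝ)/((q:ℝ) - 1 - (i:ℝ)))) ≤ Real.exp (-((i:ℝ)/(q:ℝ))) := by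
          apply Real.exp_le_exp.mpr
          have hdle : (i:ℝ)/(q:ℝ) ≤ (i:ℝ)/((q:ℝ) - 1 - (i:ℝ)) := by
            apply div_le_div_of_nonneg_left (Nat.cast_nonneg i) hden
            linarith
          linarith
        exact max_le (Real.exp_nonneg _) (le_trans h1 h2)
    _ = Real.exp (∑ i ∈ Finset.range k, -((i:ℝ)/(q:ℝ))) := (Real.exp_sum _ _).symm
    _ = Real.exp (-(∑ i ∈ Finset.range k, (i:ℝ)) / (q:ℝ)) := by
        congr 1
        rw [Finset.sum_neg_distrib, neg_div, Finset.sum_div]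

lemma tAC_le_of_AC {S : Set (PG2 F)} (hS : S ⊆ C) (hlt : S.ncard < C.ncard)
    (hcov : ∀ P ∈ Mset C, Covered S P) : tAC C ≤ S.ncard := by
  apply Nat.sInf_le
  refine ⟨S, ⟨?_, hcov⟩, rfl⟩
  rw [Set.ssubset_iff_subset_ne]
  exact ⟨hS, fun h => by rw [h] at hlt; omega⟩

end ACAux

open ACAux in

/-- The general explicit bound `t(q) ≤ √(2q)·√(ln(q²/ξ)) + ξ + 4`. -/
theorem tAC_le_general_bound (q : ℕ) (hq : Fintype.card F = q) (hq9 : 9 ≤ q)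
    (C : Set (PG2 F)) (hC : IsConic C) :
    ∀ ξ : ℝ, 1 ≤ ξ → ξ < (q : ℝ) ^ 2 →
      (tAC C : ℝ) ≤ Real.sqrt (2 * q) * Real.sqrt (Real.log ((q : ℝ) ^ 2 / ξ)) + ξ + 4 := by
  subst hq
  set q := Fintype.card F with hqdef
  intro ξ hξ1 hξq
  obtain ⟨⟨Q, hQC⟩, hA, hcard⟩ := hC
  have hq0R : (0:ℝ) < (q:ℝ) := by exact_mod_cast (by omega : 0 < q)
  have hξ0 : (0:ℝ) < ξ := by linarith
  have hqsq : (0:ℝ) < (q:ℝ)^2 := by positivity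
  set L : ℝ := Real.log ((q : ℝ) ^ 2 / ξ) with hLdef
  have hL0 : 0 ≤ L := Real.log_nonneg ((one_le_div hξ0).mpr (le_of_lt hξq))
  set s : ℝ := Real.sqrt (2 * (q:ℝ) * L) with hsdef
  have hs0 : 0 ≤ s := Real.sqrt_nonneg _
  have hsplit : Real.sqrt (2 * (q:ℝ)) * Real.sqrt L = s := by
    rw [hsdef, Real.sqrt_mul (by positivity : (0:ℝ) ≤ 2 * (q:ℝ))]
  rw [hsplit]
  have hexpL : Real.exp (-L) = ξ / (q:ℝ)^2 := by
    rw [hLdef, Real.exp_neg, Real.exp_log (by positivity), inv_div]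
  rcases le_or_gt (q:ℝ) (s + ξ + 4) with hcase | hcase
  · -- Case A : q ≤ s + ξ + 4, use an AC subset of size q
    obtain ⟨S, hSsub, hScard, hbound⟩ := chain hA hQC hcard (by omega) (q - 2) (by omega)
    have hScard' : S.ncard = q := by omega
    have hzero : fct q (q - 3) = 0 := by
      unfold fct
      have hc3 : ((q - 3 : ℕ) : ℝ) = (q:ℝ) - 3 := by
        rw [Nat.cast_sub (by omega)]; norm_num
      rw [hc3]
      have hq9R : (9:ℝ) ≤ (q:ℝ) := by exact_mod_cast hq9
      have hden : (q:ℝ) - 1 - ((q:ℝ) - 3) = 2 := by ring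
      rw [hden]
      apply max_eq_left
      linarith
    have hprod0 : (∏ i ∈ Finset.range (q - 2), fct q i) = 0 :=
      Finset.prod_eq_zero (Finset.mem_range.mpr (by omega : q - 3 < q - 2)) hzero
    rw [hprod0, mul_zero] at hbound
    have hU0 : (Unc C S).ncard = 0 := by
      have : ((Unc C S).ncard : ℝ) = 0 := le_antisymm hbound (Nat.cast_nonneg _)
      exact_mod_cast this
    have hUe : Unc C S = ∅ := (Set.ncard_eq_zero (Set.toFinite _)).mp hU0
    have hcov : ∀ P ∈ Mset C, Covered S P := by
      intro P hP
      by_contra hc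
      have : P ∈ Unc C S := ⟨hP, hc⟩
      rw [hUe] at this
      exact this
    have htle : tAC C ≤ S.ncard := tAC_le_of_AC hSsub (by omega) hcov
    have : (tAC C : ℝ) ≤ (q : ℝ) := by
      exact_mod_cast htle.trans_eq hScard'
    linarith
  · -- Case B : s + ξ + 4 < q, run the greedy argument
    set k : ℕ := ⌈s⌉₊ + 1 with hkdef
    have hceil : (⌈s⌉₊ : ℝ) < s + 1 := Nat.ceil_lt_add_one hs0
    have hsle : s ≤ (⌈s⌉₊ : ℝ) := Nat.le_ceil s
    have h2kR : ((2 + k : ℕ) : ℝ) < (q : ℝ) := by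
      rw [hkdef]; push_cast
      linarith
    have h2k : 2 + k ≤ q := le_of_lt (by exact_mod_cast h2kR)
    obtain ⟨S, hSsub, hScard, hbound⟩ := chain hA hQC hcard (by omega) k h2k
    -- sum of the exponents
    have hk1 : 1 ≤ k := by omega
    have hsum : (∑ i ∈ Finset.range k, (i:ℝ)) = (k:ℝ) * ((k:ℝ) - 1) / 2 := by
      have h2 := Finset.sum_range_id_mul_two k
      have h2' := congrArg (fun n : ℕ => (n : ℝ)) h2
      push_cast [Nat.cast_sub hk1] at h2'
      push_cast
      linarith
    have hkm1 : (k:ℝ) - 1 = (⌈s⌉₊ : ℝ) := by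
      rw [hkdef]; push_cast; ring
    have hssq : s * s = 2 * (q:ℝ) * L := Real.mul_self_sqrt (by positivity)
    have hkk : 2 * (q:ℝ) * L ≤ (k:ℝ) * ((k:ℝ) - 1) := by
      rw [← hssq]
      have hsk : s ≤ (k:ℝ) := by rw [hkdef]; push_cast; linarith
      have hsk1 : s ≤ (k:ℝ) - 1 := by rw [hkm1]; exact hsle
      exact mul_le_mul hsk hsk1 hs0 (by linarith)
    have hexpmono : Real.exp (-(∑ i ∈ Finset.range k, (i:ℝ)) / (q:ℝ)) ≤ Real.exp (-L) := by
      apply Real.exp_le_exp.mpr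
      rw [hsum, neg_div]
      have : L ≤ (k:ℝ) * ((k:ℝ) - 1) / 2 / (q:ℝ) := by
        rw [le_div_iff₀ hq0R]
        linarith
      linarith
    have hUle : ((Unc C S).ncard : ℝ) ≤ ξ := by
      have hp := prod_bound (q := q) (k := k) h2k
      calc ((Unc C S).ncard : ℝ)
          ≤ (q:ℝ)^2 * ∏ i ∈ Finset.range k, fct q i := hbound
        _ ≤ (q:ℝ)^2 * Real.exp (-(∑ i ∈ Finset.range k, (i:ℝ)) / (q:ℝ)) :=
            mul_le_mul_of_nonneg_left hp (by positivity)
        _ ≤ (q:ℝ)^2 * Real.exp (-L) := mul_le_mul_of_nonneg_left hexpmono (by positivity)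
        _ = ξ := by rw [hexpL]; field_simp
    -- extend S to cover the remaining uncovered points
    have hUcov : ∀ P, P ∈ Unc C S → ∃ a, a ∈ GoodSet C S P := by
      intro P hP
      have hgl := good_lower hA hQC (by omega) hSsub hP.1 hP.2
      have hg1 : 1 ≤ (GoodSet C S P).ncard := by omega
      obtain ⟨a, ha⟩ := (Set.ncard_pos (s := GoodSet C S P) (Set.toFinite _)).mp (by omega)
      exact ⟨a, ha⟩
    choose! g hg using hUcov
    set S' : Set (PG2 F) := S ∪ g '' (Unc C S) with hS'def
    have hS'sub : S' ⊆ C := by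
      rw [hS'def]
      apply Set.union_subset hSsub
      rintro x ⟨P, hPU, rfl⟩
      exact (hg P hPU).1
    have hcov : ∀ P ∈ Mset C, Covered S' P := by
      intro P hP
      by_cases hc : Covered S P
      · exact covered_mono Set.subset_union_left hc
      · have hPU : P ∈ Unc C S := ⟨hP, hc⟩
        exact covered_of_good (hg P hPU) Set.subset_union_left
          (Set.mem_union_right _ (Set.mem_image_of_mem g hPU))
    have hS'card : S'.ncard ≤ (2 + k) + (Unc C S).ncard := by
      calc S'.ncard ≤ S.ncard + (g '' (Unc C S)).ncard := Set.ncard_union_le _ _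
        _ ≤ (2 + k) + (Unc C S).ncard := by
            have := Set.ncard_image_le (f := g) (s := Unc C S) (Set.toFinite _)
            omega
    have hS'R : (S'.ncard : ℝ) ≤ ((2 + k : ℕ) : ℝ) + ξ := by
      have h1 : (S'.ncard : ℝ) ≤ ((2 + k : ℕ) : ℝ) + ((Unc C S).ncard : ℝ) := by
        exact_mod_cast hS'card
      linarith
    have h2k4 : ((2 + k : ℕ) : ℝ) ≤ s + 4 := by
      push_cast
      linarith
    have hlt : S'.ncard < C.ncard := by
      have hCR : (C.ncard : ℝ) = (q:ℝ) + 1 := by rw [hcard]; push_cast; ring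
      have : (S'.ncard : ℝ) < (C.ncard : ℝ) := by
        rw [hCR]
        linarith
      exact_mod_cast this
    have htle : tAC C ≤ S'.ncard := tAC_le_of_AC hS'sub hlt hcov
    have htR : (tAC C : ℝ) ≤ (S'.ncard : ℝ) := by exact_mod_cast htle
    linarith
end
end

section
/- Let q ≥ 7 be a prime power and C a nondegenerate conic in PG(2,q). There exists a 5-point subset K_5 ⊂ C such that the number of points of M_q covered by K_5 is exactly 10q - 25, hence the number of uncovered points of M_q is at most (q-5)^2. -/
open scoped Classical

noncomputable section

variable {F : Type} [Field F] [Fintype F]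

open Module Projectivization
set_option linter.unusedSectionVars false
namespace Aux

/-- linear independence of representatives of distinct points -/
theorem rep_indep {a b : PG2 F} (hab : a ≠ b) :
    LinearIndependent F ![a.rep, b.rep] := by
  have h := (Projectivization.independent_pair_iff_ne a b).2 hab
  rw [Projectivization.independent_iff] at h
  have : (Projectivization.rep ∘ ![a, b]) = ![a.rep, b.rep] := by
    funext i; fin_cases i <;> rfl
  rwa [this] at h

/-- the linear span of the reps of two points -/
def spanW (a b : PG2 F) : Submodule F (Fin 3 → F) :=
  Submodule.span F {a.rep, b.rep}

theorem finrank_spanW {a b : PG2 F} (hab : a ≠ b) :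
    finrank F (spanW a b) = 2 := by
  have h := rep_indep hab
  have : ({a.rep, b.rep} : Set (Fin 3 → F)) = Set.range ![a.rep, b.rep] := by
    simp [Matrix.range_cons, Matrix.range_empty, Set.pair_comm]
  rw [spanW, this, finrank_span_eq_card h]
  simp

theorem mem_spanW_left (a b : PG2 F) : a.rep ∈ spanW a b :=
  Submodule.subset_span (by simp)

theorem mem_spanW_right (a b : PG2 F) : b.rep ∈ spanW a b :=
  Submodule.subset_span (by simp)

theorem spanW_comm (a b : PG2 F) : spanW a b = spanW b a := by
  unfold spanW; rw [Set.pair_comm]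

/-- any 2-dim subspace containing the reps of two distinct points is their span -/
theorem eq_spanW {a b : PG2 F} (hab : a ≠ b) {W : Submodule F (Fin 3 → F)}
    (hW : finrank F W = 2) (ha : a.rep ∈ W) (hb : b.rep ∈ W) : W = spanW a b := by
  have hle : spanW a b ≤ W := Submodule.span_le.2 (by rintro x (rfl|rfl) <;> assumption)
  exact (Submodule.eq_of_le_of_finrank_eq hle (by rw [finrank_spanW hab, hW])).symm

end Aux

namespace Aux

/-- point set of a subspace -/
def pset (W : Submodule F (Fin 3 → F)) : Set (PG2 F) := {p : PG2 F | p.rep ∈ W}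

theorem rep_mk_mem_iff {W : Submodule F (Fin 3 → F)} {v : Fin 3 → F} (hv : v ≠ 0) :
    (Projectivization.mk F v hv).rep ∈ W ↔ v ∈ W := by
  obtain ⟨c, hc⟩ := Projectivization.exists_smul_eq_mk_rep F v hv
  rw [← hc, Units.smul_def]
  constructor
  · intro h
    have := W.smul_mem (↑c⁻¹ : F) h
    rwa [smul_smul, Units.inv_mul, one_smul] at this
  · exact fun h => W.smul_mem _ h

instance : Inhabited (PG2 F) := Classical.inhabited_of_nonempty inferInstance

noncomputable instance : Fintype (PG2 F) := by
  classical
  exact Fintype.ofSurjective (fun v : {v : Fin 3 → F // v ≠ 0} => Projectivization.mk' F v)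
    (fun p => Projectivization.ind (fun v h => ⟨⟨v, h⟩, rfl⟩) p)

theorem pset_ncard_mul (W : Submodule F (Fin 3 → F)) :
    (pset W).ncard * (Fintype.card F - 1) = Fintype.card W - 1 := by
  classical
  set s : Finset (Fin 3 → F) := Finset.univ.filter (fun v => v ∈ W ∧ v ≠ 0) with hs
  set t : Finset (PG2 F) := Finset.univ.filter (fun p => p.rep ∈ W) with ht
  have hcard_t : (pset W).ncard = t.card := by
    rw [show pset W = ↑t by ext p; simp [pset, ht], Set.ncard_coe_finset]
  set g : (Fin 3 → F) → PG2 F := fun v => if h : v = 0 then default else Projectivization.mk F v h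
    with hgdef
  have hg : ∀ v ∈ s, g v ∈ t := by
    intro v hv
    simp only [hs, Finset.mem_filter, Finset.mem_univ, true_and] at hv
    simp only [hgdef, dif_neg hv.2, ht, Finset.mem_filter, Finset.mem_univ, true_and]
    exact (rep_mk_mem_iff hv.2).2 hv.1
  have hsum := Finset.card_eq_sum_card_fiberwise hg
  have hfiber : ∀ b ∈ t, (s.filter (fun v => g v = b)).card = Fintype.card F - 1 := by
    intro b hb
    simp only [ht, Finset.mem_filter, Finset.mem_univ, true_and] at hb
    have hrepb : b.rep ≠ 0 := b.rep_nonzero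
    have himg : s.filter (fun v => g v = b)
        = ((Finset.univ : Finset F).filter (· ≠ 0)).image (fun c => c • b.rep) := by
      ext v
      simp only [Finset.mem_filter, Finset.mem_univ, true_and, Finset.mem_image, hs]
      constructor
      · rintro ⟨⟨hvW, hv0⟩, hgv⟩
        rw [hgdef] at hgv
        simp only [dif_neg hv0] at hgv
        rw [← b.mk_rep, Projectivization.mk_eq_mk_iff'] at hgv
        obtain ⟨c, hc⟩ := hgv
        refine ⟨c, fun h => hv0 ?_, hc⟩
        rw [← hc, h, zero_smul]
      · rintro ⟨c, hc0, rfl⟩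
        have hv0 : c • b.rep ≠ 0 := smul_ne_zero hc0 hrepb
        refine ⟨⟨Submodule.smul_mem _ _ hb, hv0⟩, ?_⟩
        rw [hgdef]
        simp only [dif_neg hv0]
        exact ((Projectivization.mk_eq_mk_iff' F _ _ hv0 hrepb).2 ⟨c, rfl⟩).trans b.mk_rep
    rw [himg, Finset.card_image_of_injective _ (smul_left_injective F hrepb),
      Finset.filter_ne' Finset.univ 0, Finset.card_erase_of_mem (Finset.mem_univ 0),
      Finset.card_univ]
  rw [Finset.sum_congr rfl hfiber, Finset.sum_const, smul_eq_mul] at hsum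
  have hscard : s.card = Fintype.card W - 1 := by
    have h1 : s = (Finset.univ.filter (fun v => v ∈ W)).erase 0 := by
      ext v
      simp only [hs, Finset.mem_filter, Finset.mem_univ, true_and, Finset.mem_erase]
      tauto
    have h2 : (Finset.univ.filter (fun v : Fin 3 → F => v ∈ W)).card = Fintype.card W := by
      rw [← Fintype.card_subtype]
    rw [h1, Finset.card_erase_of_mem (by simp [W.zero_mem]), h2]
  rw [hcard_t, ← hscard, hsum]

/-- ncard of the point set of a subspace of finrank d -/
theorem pset_ncard (W : Submodule F (Fin 3 → F)) {n : ℕ}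
    (h : (n) * (Fintype.card F - 1) = Fintype.card W - 1) :
    (pset W).ncard = n := by
  have hq : 2 ≤ Fintype.card F := Fintype.one_lt_card
  apply Nat.eq_of_mul_eq_mul_right (show 0 < Fintype.card F - 1 by omega)
  rw [pset_ncard_mul, h]

theorem pset_ncard_of_finrank_two {W : Submodule F (Fin 3 → F)}
    (hW : Module.finrank F W = 2) : (pset W).ncard = Fintype.card F + 1 := by
  have hq : 2 ≤ Fintype.card F := Fintype.one_lt_card
  apply pset_ncard
  have hcW : Fintype.card W = Fintype.card F ^ 2 := by
    rw [card_eq_pow_finrank (K := F) (V := W), hW]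
  rw [hcW]
  have : Fintype.card F ^ 2 = (Fintype.card F + 1) * (Fintype.card F - 1) + 1 := by
    obtain ⟨m, hm⟩ : ∃ m, Fintype.card F = m + 2 := ⟨Fintype.card F - 2, by omega⟩
    rw [hm, show m + 2 - 1 = m + 1 from rfl]
    ring
  omega

theorem pset_ncard_of_finrank_one {W : Submodule F (Fin 3 → F)}
    (hW : Module.finrank F W = 1) : (pset W).ncard = 1 := by
  apply pset_ncard
  rw [card_eq_pow_finrank (K := F) (V := W), hW]
  simp

theorem ncard_univ_PG2 :
    (Set.univ : Set (PG2 F)).ncard = Fintype.card F ^ 2 + Fintype.card F + 1 := by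
  have hq : 2 ≤ Fintype.card F := Fintype.one_lt_card
  have htop : pset (⊤ : Submodule F (Fin 3 → F)) = Set.univ := by
    ext p; simp [pset]
  rw [← htop]
  apply pset_ncard
  have hcW : Fintype.card (⊤ : Submodule F (Fin 3 → F)) = Fintype.card F ^ 3 := by
    rw [card_eq_pow_finrank (K := F) (V := _), finrank_top]
    congr 1
    simp [Module.finrank_pi]
  rw [hcW]
  have : Fintype.card F ^ 3 = (Fintype.card F ^ 2 + Fintype.card F + 1) * (Fintype.card F - 1) + 1 := by
    obtain ⟨m, hm⟩ : ∃ m, Fintype.card F = m + 2 := ⟨Fintype.card F - 2, by omega⟩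
    rw [hm, show m + 2 - 1 = m + 1 from rfl]
    ring
  omega

end Aux

namespace Aux

theorem finrank_V : Module.finrank F (Fin 3 → F) = 3 := by
  simp [Module.finrank_pi]

theorem collinear3_iff {a b : PG2 F} (hab : a ≠ b) (c : PG2 F) :
    Collinear3 a b c ↔ c.rep ∈ spanW a b := by
  constructor
  · rintro ⟨W, hW2, ha, hb, hc⟩
    rwa [eq_spanW hab hW2 ha hb] at hc
  · intro h
    exact ⟨spanW a b, finrank_spanW hab, mem_spanW_left a b, mem_spanW_right a b, h⟩

theorem isLine_pset {W : Submodule F (Fin 3 → F)} (hW : Module.finrank F W = 2) :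
    IsLine (pset W) := ⟨W, hW, rfl⟩

theorem finrank_inf_eq_one {W1 W2 : Submodule F (Fin 3 → F)}
    (h1 : Module.finrank F W1 = 2) (h2 : Module.finrank F W2 = 2) (hne : W1 ≠ W2) :
    Module.finrank F ↥(W1 ⊓ W2) = 1 := by
  have hsum := Submodule.finrank_sup_add_finrank_inf_eq W1 W2
  have hle : Module.finrank F ↥(W1 ⊔ W2) ≤ 3 :=
    le_trans (Submodule.finrank_le _) (le_of_eq finrank_V)
  have hlt : W1 < W1 ⊔ W2 := by
    rcases lt_or_eq_of_le (le_sup_left : W1 ≤ W1 ⊔ W2) with h | h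
    · exact h
    · exfalso
      have hW2le : W2 ≤ W1 := by rw [h]; exact le_sup_right
      exact hne (Submodule.eq_of_le_of_finrank_eq hW2le (by rw [h1, h2])).symm
  have := Submodule.finrank_lt_finrank_of_lt hlt
  omega

theorem pset_inter_pset {W1 W2 : Submodule F (Fin 3 → F)}
    (h1 : Module.finrank F W1 = 2) (h2 : Module.finrank F W2 = 2) (hne : W1 ≠ W2) :
    (pset W1 ∩ pset W2).ncard = 1 := by
  have heq : pset W1 ∩ pset W2 = pset (W1 ⊓ W2) := by
    ext p; simp [pset, Submodule.mem_inf]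
  rw [heq]
  exact pset_ncard_of_finrank_one (finrank_inf_eq_one h1 h2 hne)

theorem line_inter_conic {C : Set (PG2 F)} (hA : IsArc C) {a b : PG2 F}
    (ha : a ∈ C) (hb : b ∈ C) (hab : a ≠ b) :
    pset (spanW a b) ∩ C = {a, b} := by
  ext c
  constructor
  · rintro ⟨hc1, hc2⟩
    by_contra hcc
    rw [Set.mem_insert_iff, Set.mem_singleton_iff] at hcc
    push_neg at hcc
    exact hA a ha b hb c hc2 hab (Ne.symm hcc.2) (Ne.symm hcc.1)
      ((collinear3_iff hab c).2 hc1)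
  · intro hc
    rcases hc with hc | hc
    · subst hc; exact ⟨mem_spanW_left _ _, ha⟩
    · rw [Set.mem_singleton_iff] at hc; subst hc; exact ⟨mem_spanW_right _ _, hb⟩

/-- every point of a `(q+1)`-arc has a tangent line -/
theorem exists_tangent {C : Set (PG2 F)} (hA : IsArc C)
    (hcard : C.ncard = Fintype.card F + 1) {a : PG2 F} (ha : a ∈ C) :
    ∃ W : Submodule F (Fin 3 → F), Module.finrank F W = 2 ∧ a.rep ∈ W ∧ pset W ∩ C = {a} := by
  classical
  by_contra hcon
  push_neg at hcon
  set q := Fintype.card F with hqdef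
  have hq : 2 ≤ q := Fintype.one_lt_card
  -- every point p ≠ a lies on a bisecant through a
  have key : ∀ p : PG2 F, p ≠ a → ∃ c ∈ C, c ≠ a ∧ p ∈ pset (spanW a c) := by
    intro p hp
    have h2 := finrank_spanW (Ne.symm hp)
    have hcon' := hcon (spanW a p) h2 (mem_spanW_left a p)
    have hsub : {a} ⊆ pset (spanW a p) ∩ C := by
      intro x hx
      rw [Set.mem_singleton_iff] at hx
      subst hx
      exact ⟨mem_spanW_left _ _, ha⟩
    obtain ⟨c, hc⟩ : ∃ c, c ∈ (pset (spanW a p) ∩ C) \ {a} := by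
      by_contra h
      push_neg at h
      apply hcon'
      apply Set.Subset.antisymm _ hsub
      intro x hx
      by_contra hxa
      exact h x ⟨hx, hxa⟩
    obtain ⟨⟨hc1, hc2⟩, hc3⟩ := hc
    rw [Set.mem_singleton_iff] at hc3
    refine ⟨c, hc2, hc3, ?_⟩
    -- spanW a c = spanW a p
    have : spanW a c = spanW a p :=
      (eq_spanW (Ne.symm hc3) h2 (mem_spanW_left a p) hc1).symm
    show p.rep ∈ spanW a c
    rw [this]
    exact mem_spanW_right a p
  -- counting
  have hCfin : C.Finite := Set.toFinite C
  set D : Finset (PG2 F) := (C \ {a}).toFinset with hD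
  have hDcard : D.card = q := by
    rw [hD, ← Set.ncard_eq_toFinset_card']
    rw [Set.ncard_diff_singleton_of_mem ha, hcard]
    omega
  have hcover : (Finset.univ.erase a) ⊆ D.biUnion
      (fun c => (pset (spanW a c) \ {a}).toFinset) := by
    intro p hp
    rw [Finset.mem_erase] at hp
    obtain ⟨c, hcC, hca, hpc⟩ := key p hp.1
    rw [Finset.mem_biUnion]
    refine ⟨c, ?_, ?_⟩
    · rw [hD, Set.mem_toFinset]; exact ⟨hcC, hca⟩
    · rw [Set.mem_toFinset]; exact ⟨hpc, hp.1⟩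
  have hbound : (Finset.univ.erase a).card ≤ q * q := by
    calc (Finset.univ.erase a).card
        ≤ (D.biUnion (fun c => (pset (spanW a c) \ {a}).toFinset)).card :=
          Finset.card_le_card hcover
      _ ≤ ∑ c ∈ D, ((pset (spanW a c) \ {a}).toFinset).card := Finset.card_biUnion_le
      _ ≤ ∑ _c ∈ D, q := by
          apply Finset.sum_le_sum
          intro c hc
          rw [hD, Set.mem_toFinset] at hc
          have h2 := finrank_spanW (Ne.symm hc.2)
          have : (pset (spanW a c) \ {a}).toFinset.card = q := by
            rw [← Set.ncard_eq_toFinset_card',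
              Set.ncard_diff_singleton_of_mem
                (show a ∈ pset (spanW a c) from mem_spanW_left a c),
              pset_ncard_of_finrank_two h2]
            omega
          omega
      _ = q * q := by rw [Finset.sum_const, hDcard, smul_eq_mul]
  have huniv : (Finset.univ.erase a).card = q ^ 2 + q := by
    rw [Finset.card_erase_of_mem (Finset.mem_univ a), Finset.card_univ,
      ← Nat.card_eq_fintype_card, ← Set.ncard_univ, ncard_univ_PG2,
      Nat.add_sub_cancel]
  rw [huniv] at hbound
  nlinarith

theorem nucleus_not_on_bisecant {C : Set (PG2 F)} (hA : IsArc C)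
    (hcard : C.ncard = Fintype.card F + 1) {a b : PG2 F}
    (ha : a ∈ C) (hb : b ∈ C) (hab : a ≠ b) {O : PG2 F} (hO : IsNucleus C O)
    (hOC : O ∉ C) : O ∉ pset (spanW a b) := by
  intro hmem
  obtain ⟨Wt, hWt2, haWt, hWtC⟩ := exists_tangent hA hcard ha
  have htan : IsTangent C (pset Wt) := ⟨isLine_pset hWt2, by rw [hWtC]; simp⟩
  have hOWt : O ∈ pset Wt := hO _ htan
  have hOa : O ≠ a := fun h => hOC (h ▸ ha)
  have h1 : Wt = spanW O a := eq_spanW hOa hWt2 hOWt haWt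
  have h2 : spanW a b = spanW O a :=
    eq_spanW hOa (finrank_spanW hab) hmem (mem_spanW_left a b)
  have : pset Wt ∩ C = {a, b} := by
    rw [h1, ← h2]; exact line_inter_conic hA ha hb hab
  rw [hWtC] at this
  have : b ∈ ({a} : Set (PG2 F)) := this ▸ (Set.mem_insert_iff.2 (Or.inr rfl))
  exact hab (Set.mem_singleton_iff.1 this).symm

end Aux


namespace Aux

/-- index pairs for edges of K_5 -/
def SPair (e : Fin 5 × Fin 5) : Prop := e.1 < e.2

def Disj (e f : Fin 5 × Fin 5) : Prop :=
  e.1 ≠ f.1 ∧ e.1 ≠ f.2 ∧ e.2 ≠ f.1 ∧ e.2 ≠ f.2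

instance : DecidablePred SPair := fun e => by unfold SPair; infer_instance
instance : ∀ e f, Decidable (Disj e f) := fun e f => by unfold Disj; infer_instance

set_option synthInstance.maxSize 1024 in
theorem fact_ne_exists : ∀ e f : Fin 5 × Fin 5, SPair e → SPair f → e ≠ f →
    (f.1 ≠ e.1 ∧ f.1 ≠ e.2) ∨ (f.2 ≠ e.1 ∧ f.2 ≠ e.2) := by decide

theorem fact_shared_or : ∀ e f : Fin 5 × Fin 5, ¬ Disj e f →
    (e.1 = f.1 ∨ e.1 = f.2 ∨ e.2 = f.1 ∨ e.2 = f.2) := by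
  intro e f h
  unfold Disj at h
  tauto

set_option synthInstance.maxSize 1024 in
set_option maxHeartbeats 1000000 in
theorem fact_no3 : ∀ e f g : Fin 5 × Fin 5, SPair e → SPair f → SPair g →
    Disj e f → Disj e g → Disj f g → False := by decide

def Efin : Finset (Fin 5 × Fin 5) := Finset.univ.filter SPair

theorem Efin_card : Efin.card = 10 := by decide

def Dfin : Finset ((Fin 5 × Fin 5) × (Fin 5 × Fin 5)) :=
  Finset.univ.filter (fun x => SPair x.1 ∧ SPair x.2 ∧ x.1.1 < x.2.1 ∧ Disj x.1 x.2)

theorem Dfin_card : Dfin.card = 15 := by decide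

theorem fact_pair_eq : ∀ e f e' f' : Fin 5 × Fin 5, SPair e → SPair f → SPair e' → SPair f' →
    e.1.1 < f.1.1 → e'.1.1 < f'.1.1 →
    (e = e' ∨ e = f') → (f = e' ∨ f = f') → e ≠ f → (e, f) = (e', f') := by
  rintro e f e' f' _ _ _ _ h1 h2 he hf hne
  obtain rfl | rfl := he <;> obtain rfl | rfl := hf <;>
    first
      | rfl
      | exact absurd rfl hne
      | exact absurd rfl hne.symm
      | exact absurd h1 (lt_asymm h2)
      | exact absurd h2 (lt_asymm h1)

end Aux

namespace Aux

section Main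

variable {C : Set (PG2 F)} (hA : IsArc C) (hcard : C.ncard = Fintype.card F + 1)
variable {a : Fin 5 → PG2 F} (hinj : Function.Injective a) (haC : ∀ i, a i ∈ C)

/-- the linear subspace of the bisecant determined by edge `e` -/
def Wline (a : Fin 5 → PG2 F) (e : Fin 5 × Fin 5) : Submodule F (Fin 3 → F) :=
  spanW (a e.1) (a e.2)

/-- the points of the bisecant of edge `e` that lie off the conic -/
def Lfin (C : Set (PG2 F)) (a : Fin 5 → PG2 F) (e : Fin 5 × Fin 5) : Finset (PG2 F) :=
  (pset (Wline a e) \ C).toFinset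

include hA hinj haC

omit hA haC in
theorem hane {i j : Fin 5} (hij : i ≠ j) : a i ≠ a j := fun h => hij (hinj h)

omit hA haC in
theorem finrank_Wline {e : Fin 5 × Fin 5} (he : SPair e) :
    Module.finrank F ↥(Wline a e) = 2 :=
  finrank_spanW (hane hinj (ne_of_lt he))

theorem pset_W_inter_C {e : Fin 5 × Fin 5} (he : SPair e) :
    pset (Wline a e) ∩ C = {a e.1, a e.2} :=
  line_inter_conic hA (haC e.1) (haC e.2) (hane hinj (ne_of_lt he))

omit hA hinj haC in
theorem mem_Lfin {P : PG2 F} {e : Fin 5 × Fin 5} :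
    P ∈ Lfin C a e ↔ P.rep ∈ Wline a e ∧ P ∉ C := by
  rw [Lfin, Set.mem_toFinset, Set.mem_diff]
  exact Iff.rfl

theorem Wline_ne {e f : Fin 5 × Fin 5} (he : SPair e) (hf : SPair f) (hef : e ≠ f) :
    Wline a e ≠ Wline a f := by
  intro heq
  rcases fact_ne_exists e f he hf hef with ⟨h1, h2⟩ | ⟨h1, h2⟩
  · have hmem : a f.1 ∈ pset (Wline a e) ∩ C := by
      refine ⟨?_, haC f.1⟩
      show (a f.1).rep ∈ Wline a e
      rw [heq]; exact mem_spanW_left _ _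
    rw [pset_W_inter_C hA hinj haC he] at hmem
    rcases hmem with h | h
    · exact h1 (hinj h)
    · exact h2 (hinj h)
  · have hmem : a f.2 ∈ pset (Wline a e) ∩ C := by
      refine ⟨?_, haC f.2⟩
      show (a f.2).rep ∈ Wline a e
      rw [heq]; exact mem_spanW_right _ _
    rw [pset_W_inter_C hA hinj haC he] at hmem
    rcases hmem with h | h
    · exact h1 (hinj h)
    · exact h2 (hinj h)

theorem card_Lfin {e : Fin 5 × Fin 5} (he : SPair e) :
    (Lfin C a e).card = Fintype.card F - 1 := by
  rw [Lfin, ← Set.ncard_eq_toFinset_card']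
  have h1 : pset (Wline a e) \ C = pset (Wline a e) \ {a e.1, a e.2} := by
    rw [← pset_W_inter_C hA hinj haC he, Set.diff_self_inter]
  rw [h1, Set.ncard_diff (by
      rw [← pset_W_inter_C hA hinj haC he]; exact Set.inter_subset_left),
    pset_ncard_of_finrank_two (finrank_Wline hinj he),
    Set.ncard_pair (hane hinj (ne_of_lt he))]
  omega

theorem inter_singleton {e f : Fin 5 × Fin 5} (he : SPair e) (hf : SPair f) (hef : e ≠ f) :
    ∃ P : PG2 F, pset (Wline a e) ∩ pset (Wline a f) = {P} :=
  Set.ncard_eq_one.mp (pset_inter_pset (finrank_Wline hinj he) (finrank_Wline hinj hf)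
    (Wline_ne hA hinj haC he hf hef))

theorem inter_shared_empty {e f : Fin 5 × Fin 5} (he : SPair e) (hf : SPair f) (hef : e ≠ f)
    (hnd : ¬ Disj e f) : Lfin C a e ∩ Lfin C a f = ∅ := by
  obtain ⟨P, hP⟩ := inter_singleton hA hinj haC he hf hef
  have hPC : P ∈ C := by
    have : ∃ k : Fin 5, a k ∈ pset (Wline a e) ∩ pset (Wline a f) := by
      rcases fact_shared_or e f hnd with h | h | h | h
      · exact ⟨e.1, mem_spanW_left _ _, by show _ ∈ Wline a f; rw [h]; exact mem_spanW_left _ _⟩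
      · exact ⟨e.1, mem_spanW_left _ _, by show _ ∈ Wline a f; rw [h]; exact mem_spanW_right _ _⟩
      · exact ⟨e.2, mem_spanW_right _ _, by show _ ∈ Wline a f; rw [h]; exact mem_spanW_left _ _⟩
      · exact ⟨e.2, mem_spanW_right _ _, by show _ ∈ Wline a f; rw [h]; exact mem_spanW_right _ _⟩
    obtain ⟨k, hk⟩ := this
    rw [hP, Set.mem_singleton_iff] at hk
    rw [← hk]
    exact haC k
  ext x
  simp only [Finset.mem_inter, Finset.notMem_empty, iff_false]
  rintro ⟨hx1, hx2⟩
  rw [mem_Lfin] at hx1 hx2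
  have : x ∈ pset (Wline a e) ∩ pset (Wline a f) := ⟨hx1.1, hx2.1⟩
  rw [hP, Set.mem_singleton_iff] at this
  exact hx1.2 (this ▸ hPC)

theorem inter_disj_singleton {e f : Fin 5 × Fin 5} (he : SPair e) (hf : SPair f)
    (hd : Disj e f) : ∃ P : PG2 F, Lfin C a e ∩ Lfin C a f = {P} := by
  have hef : e ≠ f := fun h => hd.1 (by rw [h])
  obtain ⟨P, hP⟩ := inter_singleton hA hinj haC he hf hef
  have hPe : P.rep ∈ Wline a e := by
    have : P ∈ pset (Wline a e) ∩ pset (Wline a f) := by rw [hP]; rfl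
    exact this.1
  have hPf : P.rep ∈ Wline a f := by
    have : P ∈ pset (Wline a e) ∩ pset (Wline a f) := by rw [hP]; rfl
    exact this.2
  have hPC : P ∉ C := by
    intro hPC
    have h1 : P ∈ pset (Wline a e) ∩ C := ⟨hPe, hPC⟩
    have h2 : P ∈ pset (Wline a f) ∩ C := ⟨hPf, hPC⟩
    rw [pset_W_inter_C hA hinj haC he] at h1
    rw [pset_W_inter_C hA hinj haC hf] at h2
    obtain ⟨h1', h2', h3', h4'⟩ := hd
    rcases h1 with h | h <;> rcases h2 with h' | h'
    · exact h1' (hinj (h ▸ h'.symm ▸ rfl))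
    · exact h2' (hinj (h ▸ h'.symm ▸ rfl))
    · exact h3' (hinj (h ▸ h'.symm ▸ rfl))
    · exact h4' (hinj (h ▸ h'.symm ▸ rfl))
  refine ⟨P, ?_⟩
  ext x
  simp only [Finset.mem_inter, Finset.mem_singleton, mem_Lfin]
  constructor
  · rintro ⟨⟨hx1, hx2⟩, ⟨hx3, _⟩⟩
    have : x ∈ pset (Wline a e) ∩ pset (Wline a f) := ⟨hx1, hx3⟩
    rwa [hP, Set.mem_singleton_iff] at this
  · rintro rfl
    exact ⟨⟨hPe, hPC⟩, ⟨hPf, hPC⟩⟩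

theorem disj_of_mem_inter {e f : Fin 5 × Fin 5} (he : SPair e) (hf : SPair f) (hef : e ≠ f)
    {P : PG2 F} (hPe : P ∈ Lfin C a e) (hPf : P ∈ Lfin C a f) : Disj e f := by
  by_contra hnd
  have := inter_shared_empty hA hinj haC he hf hef hnd
  have : P ∈ (∅ : Finset (PG2 F)) := this ▸ Finset.mem_inter.2 ⟨hPe, hPf⟩
  exact absurd this (Finset.notMem_empty P)

end Main

end Aux

namespace Aux

theorem mem_Efin {e : Fin 5 × Fin 5} : e ∈ Efin ↔ SPair e := by
  simp [Efin]

theorem mem_Dfin {x : (Fin 5 × Fin 5) × (Fin 5 × Fin 5)} :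
    x ∈ Dfin ↔ SPair x.1 ∧ SPair x.2 ∧ x.1.1 < x.2.1 ∧ Disj x.1 x.2 := by
  simp [Dfin]

section Main2

variable {C : Set (PG2 F)} (hA : IsArc C) (hcard : C.ncard = Fintype.card F + 1)
variable {a : Fin 5 → PG2 F} (hinj : Function.Injective a) (haC : ∀ i, a i ∈ C)

include hA hcard hinj haC

theorem filter_eq_pair {e f : Fin 5 × Fin 5} (he : SPair e) (hf : SPair f) (hd : Disj e f)
    {P : PG2 F} (hPe : P ∈ Lfin C a e) (hPf : P ∈ Lfin C a f) :
    Efin.filter (fun g => P ∈ Lfin C a g) = {e, f} := by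
  ext g
  rw [Finset.mem_filter, Finset.mem_insert, Finset.mem_singleton, mem_Efin]
  constructor
  · rintro ⟨hgS, hPg⟩
    by_contra hg
    push_neg at hg
    have d1 := disj_of_mem_inter hA hinj haC hgS he hg.1 hPg hPe
    have d2 := disj_of_mem_inter hA hinj haC hgS hf hg.2 hPg hPf
    exact fact_no3 g e f hgS he hf d1 d2 hd
  · rintro (rfl | rfl)
    · exact ⟨he, hPe⟩
    · exact ⟨hf, hPf⟩

set_option maxHeartbeats 1000000 in
theorem main_count (hq7 : 7 ≤ Fintype.card F) :
    {P ∈ Mset C | Covered (Set.range a) P}.ncard = 10 * Fintype.card F - 25 ∧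
    {P ∈ Mset C | ¬ Covered (Set.range a) P}.ncard ≤ (Fintype.card F - 5) ^ 2 := by
  classical
  set q := Fintype.card F with hqdef
  set U : Finset (PG2 F) := Efin.biUnion (Lfin C a) with hUdef
  -- degrees are 1 or 2
  have hdeg : ∀ P ∈ U, (Efin.filter (fun e => P ∈ Lfin C a e)).card = 1 ∨
      (Efin.filter (fun e => P ∈ Lfin C a e)).card = 2 := by
    intro P hP
    rw [hUdef, Finset.mem_biUnion] at hP
    obtain ⟨e, heE, hPe⟩ := hP
    have h1 : 1 ≤ (Efin.filter (fun e => P ∈ Lfin C a e)).card :=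
      Finset.card_pos.2 ⟨e, Finset.mem_filter.2 ⟨heE, hPe⟩⟩
    have h2 : (Efin.filter (fun e => P ∈ Lfin C a e)).card ≤ 2 := by
      by_contra hgt
      push_neg at hgt
      obtain ⟨t, hts, ht3⟩ :=
        Finset.exists_subset_card_eq
          (show 3 ≤ (Efin.filter (fun e => P ∈ Lfin C a e)).card from hgt)
      rw [Finset.card_eq_three] at ht3
      obtain ⟨x, y, z, hxy, hxz, hyz, rfl⟩ := ht3
      have hxf := Finset.mem_filter.1 (hts (show x ∈ ({x, y, z} : Finset _) by simp))
      have hyf := Finset.mem_filter.1 (hts (show y ∈ ({x, y, z} : Finset _) by simp))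
      have hzf := Finset.mem_filter.1 (hts (show z ∈ ({x, y, z} : Finset _) by simp))
      rw [mem_Efin] at hxf hyf hzf
      have d1 := disj_of_mem_inter hA hinj haC hxf.1 hyf.1 hxy hxf.2 hyf.2
      have d2 := disj_of_mem_inter hA hinj haC hxf.1 hzf.1 hxz hxf.2 hzf.2
      have d3 := disj_of_mem_inter hA hinj haC hyf.1 hzf.1 hyz hyf.2 hzf.2
      exact fact_no3 x y z hxf.1 hyf.1 hzf.1 d1 d2 d3
    omega
  -- double counting
  have hsum : ∑ e ∈ Efin, (Lfin C a e).card
      = ∑ P ∈ U, (Efin.filter (fun e => P ∈ Lfin C a e)).card := by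
    have h1 : ∀ e ∈ Efin, (Lfin C a e).card
        = ∑ P ∈ U, if P ∈ Lfin C a e then 1 else 0 := by
      intro e he
      have h2 : U.filter (fun P => P ∈ Lfin C a e) = Lfin C a e := by
        ext P
        rw [Finset.mem_filter]
        exact ⟨fun h => h.2, fun h => ⟨Finset.mem_biUnion.2 ⟨e, he, h⟩, h⟩⟩
      calc (Lfin C a e).card = (U.filter (fun P => P ∈ Lfin C a e)).card := by rw [h2]
        _ = ∑ P ∈ U, if P ∈ Lfin C a e then 1 else 0 := Finset.card_filter _ _
    rw [Finset.sum_congr rfl h1, Finset.sum_comm]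
    exact Finset.sum_congr rfl fun P _ => (Finset.card_filter _ _).symm
  -- the 15 double points
  have hexist : ∀ x ∈ Dfin, ∃ P : PG2 F, Lfin C a x.1 ∩ Lfin C a x.2 = {P} := by
    intro x hx
    rw [mem_Dfin] at hx
    exact inter_disj_singleton hA hinj haC hx.1 hx.2.1 hx.2.2.2
  have hU2card : (U.filter
      (fun P => (Efin.filter (fun e => P ∈ Lfin C a e)).card = 2)).card = 15 := by
    rw [← Dfin_card]
    symm
    refine Finset.card_bij (fun x hx => (hexist x hx).choose) ?_ ?_ ?_
    · -- maps into U2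
      intro x hx
      have hspec := (hexist x hx).choose_spec
      have hxD := mem_Dfin.1 hx
      have hmem : (hexist x hx).choose ∈ Lfin C a x.1 ∩ Lfin C a x.2 :=
        Finset.singleton_subset_iff.1 (le_of_eq hspec.symm)
      rw [Finset.mem_inter] at hmem
      rw [Finset.mem_filter]
      constructor
      · exact Finset.mem_biUnion.2 ⟨x.1, mem_Efin.2 hxD.1, hmem.1⟩
      · rw [filter_eq_pair hA hcard hinj haC hxD.1 hxD.2.1 hxD.2.2.2 hmem.1 hmem.2]
        exact Finset.card_pair (fun h => absurd (congrArg Prod.fst h)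
          (ne_of_lt hxD.2.2.1))
    · -- injective
      intro x hx y hy heq
      have hxD := mem_Dfin.1 hx
      have hyD := mem_Dfin.1 hy
      have hspecx := (hexist x hx).choose_spec
      have hspecy := (hexist y hy).choose_spec
      have hmemx : (hexist x hx).choose ∈ Lfin C a x.1 ∩ Lfin C a x.2 :=
        Finset.singleton_subset_iff.1 (le_of_eq hspecx.symm)
      have hmemy : (hexist y hy).choose ∈ Lfin C a y.1 ∩ Lfin C a y.2 :=
        Finset.singleton_subset_iff.1 (le_of_eq hspecy.symm)
      rw [Finset.mem_inter] at hmemx hmemy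
      replace heq : (hexist x hx).choose = (hexist y hy).choose := heq
      rw [← heq] at hmemy
      have hfx := filter_eq_pair hA hcard hinj haC hxD.1 hxD.2.1 hxD.2.2.2 hmemx.1 hmemx.2
      have hfy := filter_eq_pair hA hcard hinj haC hyD.1 hyD.2.1 hyD.2.2.2 hmemy.1 hmemy.2
      have hpair : ({x.1, x.2} : Finset (Fin 5 × Fin 5)) = {y.1, y.2} := by
        rw [← hfx, ← hfy]
      have hx1 : x.1 = y.1 ∨ x.1 = y.2 := by
        have : x.1 ∈ ({y.1, y.2} : Finset (Fin 5 × Fin 5)) := by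
          rw [← hpair]; exact Finset.mem_insert_self _ _
        simpa using this
      have hx2 : x.2 = y.1 ∨ x.2 = y.2 := by
        have : x.2 ∈ ({y.1, y.2} : Finset (Fin 5 × Fin 5)) := by
          rw [← hpair]; simp
        simpa using this
      have hne : x.1 ≠ x.2 := fun h => hxD.2.2.2.1 (by rw [← h])
      have := fact_pair_eq x.1 x.2 y.1 y.2 hxD.1 hxD.2.1 hyD.1 hyD.2.1
        hxD.2.2.1 hyD.2.2.1 hx1 hx2 hne
      have h1 : x.1 = y.1 := congrArg Prod.fst this
      have h2 : x.2 = y.2 := congrArg Prod.snd this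
      exact Prod.ext h1 h2
    · -- surjective
      intro P hP
      rw [Finset.mem_filter] at hP
      obtain ⟨hPU, hP2⟩ := hP
      obtain ⟨e, f, hef, hefeq⟩ := Finset.card_eq_two.1 hP2
      have hemem : e ∈ Efin.filter (fun g => P ∈ Lfin C a g) := by
        rw [hefeq]; exact Finset.mem_insert_self _ _
      have hfmem : f ∈ Efin.filter (fun g => P ∈ Lfin C a g) := by
        rw [hefeq]; simp
      rw [Finset.mem_filter, mem_Efin] at hemem hfmem
      have hd := disj_of_mem_inter hA hinj haC hemem.1 hfmem.1 hef hemem.2 hfmem.2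
      have h1ne : e.1 ≠ f.1 := hd.1
      rcases lt_or_gt_of_ne h1ne with hlt | hlt
      · have hxD : (e, f) ∈ Dfin := mem_Dfin.2 ⟨hemem.1, hfmem.1, hlt, hd⟩
        refine ⟨(e, f), hxD, ?_⟩
        have hspec := (hexist (e, f) hxD).choose_spec
        have hPmem : P ∈ Lfin C a e ∩ Lfin C a f := Finset.mem_inter.2 ⟨hemem.2, hfmem.2⟩
        rw [hspec] at hPmem
        exact (Finset.mem_singleton.1 hPmem).symm
      · have hd' : Disj f e := ⟨hd.1.symm, hd.2.2.1.symm, hd.2.1.symm, hd.2.2.2.symm⟩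
        have hxD : (f, e) ∈ Dfin := mem_Dfin.2 ⟨hfmem.1, hemem.1, hlt, hd'⟩
        refine ⟨(f, e), hxD, ?_⟩
        have hspec := (hexist (f, e) hxD).choose_spec
        have hPmem : P ∈ Lfin C a f ∩ Lfin C a e := Finset.mem_inter.2 ⟨hfmem.2, hemem.2⟩
        rw [hspec] at hPmem
        exact (Finset.mem_singleton.1 hPmem).symm
  -- total count of the union
  have hsumconst : ∑ e ∈ Efin, (Lfin C a e).card = 10 * (q - 1) := by
    rw [Finset.sum_congr rfl (fun e he => card_Lfin hA hinj haC (mem_Efin.1 he)),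
      Finset.sum_const, Efin_card, smul_eq_mul]
  have hUcard : U.card = 10 * q - 25 := by
    have hsplit := Finset.sum_filter_add_sum_filter_not U
      (fun P => (Efin.filter (fun e => P ∈ Lfin C a e)).card = 2)
      (fun P => (Efin.filter (fun e => P ∈ Lfin C a e)).card)
    have hcards := Finset.card_filter_add_card_filter_not
      (s := U) (p := fun P => (Efin.filter (fun e => P ∈ Lfin C a e)).card = 2)
    have h2sum : ∑ P ∈ U.filter
        (fun P => (Efin.filter (fun e => P ∈ Lfin C a e)).card = 2),
        (Efin.filter (fun e => P ∈ Lfin C a e)).card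
        = 2 * 15 := by
      rw [Finset.sum_congr rfl (fun P hP => (Finset.mem_filter.1 hP).2),
        Finset.sum_const, hU2card, smul_eq_mul, mul_comm]
    have h1sum : ∑ P ∈ U.filter
        (fun P => ¬ (Efin.filter (fun e => P ∈ Lfin C a e)).card = 2),
        (Efin.filter (fun e => P ∈ Lfin C a e)).card
        = (U.filter (fun P => ¬ (Efin.filter
            (fun e => P ∈ Lfin C a e)).card = 2)).card := by
      rw [Finset.sum_congr rfl (fun P hP => ?_), Finset.sum_const, smul_eq_mul, mul_one]
      have hPf := Finset.mem_filter.1 hP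
      rcases hdeg P hPf.1 with h | h
      · exact h
      · exact absurd h hPf.2
    rw [hsum] at hsumconst
    rw [← hsplit, h2sum, h1sum] at hsumconst
    rw [hU2card] at hcards
    omega
  -- covered points are exactly the union
  have hnotnuc : ∀ P ∈ U, ¬ IsNucleus C P := by
    intro P hPU hnuc
    rw [hUdef, Finset.mem_biUnion] at hPU
    obtain ⟨e, heE, hPe⟩ := hPU
    rw [mem_Lfin] at hPe
    exact nucleus_not_on_bisecant hA hcard (haC e.1) (haC e.2)
      (hane hinj (ne_of_lt (mem_Efin.1 heE))) hnuc hPe.2 hPe.1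
  have hPU_notC : ∀ P ∈ U, P ∉ C := by
    intro P hPU
    rw [hUdef, Finset.mem_biUnion] at hPU
    obtain ⟨e, _, hPe⟩ := hPU
    exact (mem_Lfin.1 hPe).2
  have hMC : Mset C ⊆ Set.univ \ C := by
    unfold Mset
    split_ifs
    · exact Set.diff_subset
    · exact le_refl _
  have hcov_iff : ∀ P : PG2 F, P ∉ C → (Covered (Set.range a) P ↔ P ∈ U) := by
    intro P hPC
    constructor
    · rintro ⟨x, ⟨i, rfl⟩, y, ⟨j, rfl⟩, hxy, hcol⟩
      have hij : i ≠ j := fun h => hxy (congrArg a h)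
      have hrep := (collinear3_iff hxy P).1 hcol
      rcases lt_or_gt_of_ne hij with hlt | hlt
      · refine Finset.mem_biUnion.2 ⟨(i, j), mem_Efin.2 hlt, mem_Lfin.2 ⟨hrep, hPC⟩⟩
      · refine Finset.mem_biUnion.2 ⟨(j, i), mem_Efin.2 hlt, mem_Lfin.2 ⟨?_, hPC⟩⟩
        show P.rep ∈ spanW (a j) (a i)
        rw [spanW_comm]
        exact hrep
    · intro hPU
      rw [hUdef, Finset.mem_biUnion] at hPU
      obtain ⟨e, heE, hPe⟩ := hPU
      have he := mem_Efin.1 heE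
      exact ⟨a e.1, ⟨e.1, rfl⟩, a e.2, ⟨e.2, rfl⟩, hane hinj (ne_of_lt he),
        (collinear3_iff (hane hinj (ne_of_lt he)) P).2 (mem_Lfin.1 hPe).1⟩
  have hset : {P ∈ Mset C | Covered (Set.range a) P} = ↑U := by
    ext P
    simp only [Set.mem_setOf_eq, Finset.coe_sort_coe, Finset.mem_coe]
    constructor
    · rintro ⟨hM, hcov⟩
      exact (hcov_iff P (hMC hM).2).1 hcov
    · intro hPU
      have hPC := hPU_notC P hPU
      refine ⟨?_, (hcov_iff P hPC).2 hPU⟩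
      unfold Mset
      split_ifs
      · exact ⟨⟨Set.mem_univ P, hPC⟩, hnotnuc P hPU⟩
      · exact ⟨Set.mem_univ P, hPC⟩
  have hcovered : {P ∈ Mset C | Covered (Set.range a) P}.ncard = 10 * q - 25 := by
    rw [hset, Set.ncard_coe_finset, hUcard]
  refine ⟨hcovered, ?_⟩
  -- the uncovered bound
  have huncov_eq : {P ∈ Mset C | ¬ Covered (Set.range a) P}
      = Mset C \ {P ∈ Mset C | Covered (Set.range a) P} := by
    ext P
    simp only [Set.mem_setOf_eq, Set.mem_diff]
    constructor
    · rintro ⟨hM, hnc⟩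
      exact ⟨hM, fun h => hnc h.2⟩
    · rintro ⟨hM, h⟩
      exact ⟨hM, fun hc => h ⟨hM, hc⟩⟩
  have hMle : (Mset C).ncard ≤ q ^ 2 := by
    have hdiff : (Set.univ \ C).ncard = q ^ 2 := by
      rw [Set.ncard_diff (Set.subset_univ C), ncard_univ_PG2, hcard]
      have : q ^ 2 + q + 1 = q ^ 2 + (q + 1) := by ring
      rw [← hqdef, this, Nat.add_sub_cancel]
    calc (Mset C).ncard ≤ (Set.univ \ C).ncard :=
          Set.ncard_le_ncard hMC (Set.toFinite _)
      _ = q ^ 2 := hdiff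
  rw [huncov_eq, Set.ncard_diff (Set.sep_subset _ _), hcovered]
  calc (Mset C).ncard - (10 * q - 25) ≤ q ^ 2 - (10 * q - 25) :=
        Nat.sub_le_sub_right hMle _
    _ ≤ (q - 5) ^ 2 := by
        obtain ⟨m, hm⟩ : ∃ m, q = m + 7 := ⟨q - 7, by omega⟩
        have h10 : 10 * q - 25 = 10 * m + 45 := by omega
        have hq5 : q - 5 = m + 2 := by omega
        have key : q ^ 2 = (m + 2) ^ 2 + (10 * m + 45) := by rw [hm]; ring
        rw [h10, hq5, key, Nat.add_sub_cancel]

end Main2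

end Aux

/-- There is a 5-point subset of the conic covering exactly `10q - 25` points of
`M_q`, hence leaving at most `(q-5)²` points uncovered. -/
theorem exists_five_subset (q : ℕ) (hq : Fintype.card F = q) (hq7 : 7 ≤ q)
    (C : Set (PG2 F)) (hC : IsConic C) :
    ∃ K : Set (PG2 F), K ⊆ C ∧ K.ncard = 5 ∧
      {P ∈ Mset C | Covered K P}.ncard = 10 * q - 25 ∧
      {P ∈ Mset C | ¬ Covered K P}.ncard ≤ (q - 5) ^ 2 := by
  classical
  obtain ⟨-, hA, hcard⟩ := hC
  subst hq
  have h5 : 5 ≤ C.toFinset.card := by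
    rw [← Set.ncard_eq_toFinset_card', hcard]
    omega
  obtain ⟨s, hsub, hs5⟩ := Finset.exists_subset_card_eq h5
  let eqv : Fin 5 ≃ {x // x ∈ s} := (finCongr hs5.symm).trans s.equivFin.symm
  set a : Fin 5 → PG2 F := fun i => ↑(eqv i) with hadef
  have hinj : Function.Injective a := fun i j h =>
    eqv.injective (Subtype.coe_injective h)
  have haC : ∀ i, a i ∈ C := by
    intro i
    have h1 := hsub (eqv i).2
    rwa [Set.mem_toFinset] at h1
  have hm := Aux.main_count hA hcard hinj haC hq7
  refine ⟨Set.range a, ?_, ?_, hm.1, hm.2⟩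
  · rintro x ⟨i, rfl⟩
    exact haC i
  · rw [← Set.image_univ, Set.ncard_image_of_injective _ hinj, Set.ncard_univ,
      Nat.card_eq_fintype_card, Fintype.card_fin]
end
end
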